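/- arXiv:1912.01162 — 7 statements merged into one kernel-verified Lean document; each statement's English description precedes it below -/
import Mathlib

section
/- If E is a quasi-uniformly convex Banach lattice, then the norm of the dual Banach lattice E* is order continuous. -/
/-!
Quasi-uniform convexity with constant `α` gives `‖u + v‖ ≤ 2α c` for disjoint `u, v ≥ 0` of norm
at most `c`. Halving repeatedly, a sum of `2 ^ m` pairwise disjoint positive elements of the unit
ball has norm at most `(2α) ^ m`. If `|φ (xₙ)| ≥ ε` for infinitely many terms of a disjoint
sequence in the unit ball, then, after choosing signs, `2 ^ m ε ≤ ‖φ‖ (2α) ^ m` for every `m`,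
which is absurd since `α < 1`.
-/

open Filter

/-- The dual of a Banach lattice has order continuous norm iff every norm-bounded
disjoint sequence in `E` converges weakly to `0` (Meyer-Nieberg, Theorem 2.4.14);
we use this characterization as our formal rendering of the statement
"`E*` has order continuous norm". -/
def DualHasOrderContinuousNorm (E : Type*) [NormedAddCommGroup E] [Lattice E] [HasSolidNorm E]
    [IsOrderedAddMonoid E]
    [NormedSpace ℝ E] : Prop :=
  ∀ x : ℕ → E, (∀ n, ‖x n‖ ≤ 1) → (∀ n m, n ≠ m → |x n| ⊓ |x m| = 0) →
    ∀ φ : E →L[ℝ] ℝ, Tendsto (fun n => φ (x n)) atTop (nhds 0)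

open Finset

section LatticeOrderedGroup

variable {G ι : Type*} [Lattice G] [AddCommGroup G] [IsOrderedAddMonoid G]

theorem nonneg_of_two_pow_nsmul_nonneg {a : G} : ∀ {k : ℕ}, 0 ≤ 2 ^ k • a → 0 ≤ a
  | 0, h => by simpa using h
  | k + 1, h => nsmul_two_semiclosed <| nonneg_of_two_pow_nsmul_nonneg <| by
      rwa [← mul_nsmul', ← pow_succ]

theorem abs_sum_le_sum_abs_of_lattice (s : Finset ι) (f : ι → G) :
    |∑ i ∈ s, f i| ≤ ∑ i ∈ s, |f i| := by
  induction s using Finset.cons_induction with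
  | empty => simp
  | cons i s hi ih =>
    rw [sum_cons, sum_cons]
    exact (abs_add_le _ _).trans (add_le_add_right ih _)

theorem inf_add_eq_zero {a b c : G} (ha : 0 ≤ a) (hb : 0 ≤ b) (hc : 0 ≤ c)
    (hab : a ⊓ b = 0) (hac : a ⊓ c = 0) : a ⊓ (b + c) = 0 := by
  have h₁ : a ⊓ (b + c) ≤ a ⊓ b + c := by
    rw [inf_add]
    exact inf_le_inf_right _ (le_add_of_nonneg_right hc)
  have h₂ : a ⊓ (b + c) ≤ a ⊓ b + a :=
    inf_le_left.trans (le_add_of_nonneg_left (le_inf ha hb))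
  have h₃ : a ⊓ (b + c) - a ⊓ b ≤ a ⊓ c :=
    le_inf (sub_le_iff_le_add'.mpr h₂) (sub_le_iff_le_add'.mpr h₁)
  rw [hab, hac, sub_zero] at h₃
  exact h₃.antisymm (le_inf ha (add_nonneg hb hc))

theorem inf_sum_eq_zero {a : G} {u : ι → G} {s : Finset ι} (ha : 0 ≤ a)
    (hu : ∀ i, 0 ≤ u i) (h : ∀ i ∈ s, a ⊓ u i = 0) : a ⊓ ∑ i ∈ s, u i = 0 := by
  induction s using Finset.cons_induction with
  | empty => simpa using inf_of_le_right ha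
  | cons i s hi ih =>
    rw [sum_cons]
    exact inf_add_eq_zero ha (hu i) (sum_nonneg fun j _ => hu j) (h i (mem_cons_self i s))
      (ih fun j hj => h j (mem_cons_of_mem hj))

theorem sum_inf_sum_eq_zero {u : ι → G} (hu : ∀ i, 0 ≤ u i)
    (hdisj : Pairwise fun i j => u i ⊓ u j = 0) {s t : Finset ι} (hst : Disjoint s t) :
    (∑ i ∈ s, u i) ⊓ ∑ j ∈ t, u j = 0 :=
  inf_sum_eq_zero (sum_nonneg fun i _ => hu i) hu fun j hj => by
    rw [inf_comm]
    exact inf_sum_eq_zero (hu j) hu fun i hi =>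
      hdisj (fun hji => disjoint_left.mp hst hi (hji ▸ hj))

theorem dyadic_smul_nonneg [Module ℝ G] (n k : ℕ) {x : G} (hx : 0 ≤ x) :
    0 ≤ ((n : ℝ) / 2 ^ k) • x := by
  apply nonneg_of_two_pow_nsmul_nonneg (k := k)
  rw [← Nat.cast_smul_eq_nsmul ℝ, smul_smul, Nat.cast_pow, Nat.cast_ofNat,
    mul_div_cancel₀ _ (by positivity), Nat.cast_smul_eq_nsmul]
  exact nsmul_nonneg hx n

end LatticeOrderedGroup

section SolidNorm

variable {E : Type*} [NormedAddCommGroup E] [Lattice E] [HasSolidNorm E] [IsOrderedAddMonoid E]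
  [NormedSpace ℝ E]

/-- The positive cone is closed and stable under halving, and the dyadic rationals are dense in
`[0, ∞)`. -/
instance HasSolidNorm.posSMulMono : PosSMulMono ℝ E :=
  PosSMulMono.of_smul_nonneg fun c hc x hx => by
    have hdyadic : Tendsto (fun k : ℕ => (⌊c * 2 ^ k⌋₊ : ℝ) / 2 ^ k) atTop (nhds c) :=
      (tendsto_nat_floor_mul_div_atTop hc).comp
        (tendsto_pow_atTop_atTop_of_one_lt one_lt_two)
    exact ge_of_tendsto' (hdyadic.smul_const x) fun k => dyadic_smul_nonneg _ k hx

theorem smul_inf_smul_eq_zero {u v : E} (hu : 0 ≤ u) (hv : 0 ≤ v) (huv : u ⊓ v = 0)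
    {c d : ℝ} (hc : 0 ≤ c) (hd : 0 ≤ d) : c • u ⊓ d • v = 0 := by
  set t := max c d + 1
  have ht : 0 < t := by positivity
  refine le_antisymm ?_ (le_inf (smul_nonneg hc hu) (smul_nonneg hd hv))
  calc c • u ⊓ d • v ≤ t • u ⊓ t • v :=
        inf_le_inf (smul_le_smul_of_nonneg_right (by grind) hu)
          (smul_le_smul_of_nonneg_right (by grind) hv)
    _ = t • (u ⊓ v) := ((OrderIso.smulRight ht).map_inf u v).symm
    _ = 0 := by rw [huv, smul_zero]

theorem sum_abs_apply_le_opNorm_mul_norm_sum_abs {ι : Type*} (φ : E →L[ℝ] ℝ) (s : Finset ι)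
    (x : ι → E) : ∑ i ∈ s, |φ (x i)| ≤ ‖φ‖ * ‖∑ i ∈ s, |x i|‖ := by
  set y : ι → E := fun i => if 0 ≤ φ (x i) then x i else -x i
  have hy_abs (i : ι) : |y i| = |x i| := by unfold y; split_ifs <;> simp
  have hy_apply (i : ι) : φ (y i) = |φ (x i)| := by
    unfold y; split_ifs with h
    · exact (abs_of_nonneg h).symm
    · rw [map_neg, abs_of_neg (not_le.mp h)]
  have hy_norm : ‖∑ i ∈ s, y i‖ ≤ ‖∑ i ∈ s, |x i|‖ := by
    refine HasSolidNorm.solid ?_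
    rw [abs_of_nonneg (sum_nonneg fun i _ => abs_nonneg (x i))]
    simpa only [hy_abs] using abs_sum_le_sum_abs_of_lattice s y
  calc ∑ i ∈ s, |φ (x i)| = φ (∑ i ∈ s, y i) := by simp only [map_sum, hy_apply]
    _ ≤ ‖φ‖ * ‖∑ i ∈ s, y i‖ := (le_abs_self _).trans (φ.le_opNorm _)
    _ ≤ ‖φ‖ * ‖∑ i ∈ s, |x i|‖ := by gcongr

end SolidNorm

section QuasiUniformlyConvex

variable {E : Type*} [NormedAddCommGroup E] [Lattice E] [NormedSpace ℝ E]

variable (E) in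
def QuasiUniformlyConvexWith (α : ℝ) : Prop :=
  ∀ u v : E, 0 ≤ u → 0 ≤ v → u ⊓ v = 0 → ‖u‖ = 1 → ‖v‖ = 1 → ‖(1 / 2 : ℝ) • (u + v)‖ < α

namespace QuasiUniformlyConvexWith

variable {α : ℝ}

theorem mono {β : ℝ} (h : QuasiUniformlyConvexWith E α) (hαβ : α ≤ β) :
    QuasiUniformlyConvexWith E β :=
  fun u v hu hv huv hu1 hv1 => (h u v hu hv huv hu1 hv1).trans_le hαβ

variable [HasSolidNorm E] [IsOrderedAddMonoid E]

theorem norm_add_le (h : QuasiUniformlyConvexWith E α) (hα : 1 / 2 ≤ α) {u v : E}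
    (hu : 0 ≤ u) (hv : 0 ≤ v) (huv : u ⊓ v = 0) {c : ℝ} (huc : ‖u‖ ≤ c) (hvc : ‖v‖ ≤ c) :
    ‖u + v‖ ≤ 2 * α * c := by
  have hc : 0 ≤ c := (norm_nonneg u).trans huc
  have hc_le : c ≤ 2 * α * c := le_mul_of_one_le_left hc (by linarith)
  rcases eq_or_ne u 0 with rfl | hu0
  · simpa using hvc.trans hc_le
  rcases eq_or_ne v 0 with rfl | hv0
  · simpa using huc.trans hc_le
  set u' := ‖u‖⁻¹ • u
  set v' := ‖v‖⁻¹ • v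
  have hu' : 0 ≤ u' := smul_nonneg (by positivity) hu
  have hv' : 0 ≤ v' := smul_nonneg (by positivity) hv
  have hle_smul {w : E} (hw : 0 ≤ w) (hw0 : w ≠ 0) (hwc : ‖w‖ ≤ c) : w ≤ c • ‖w‖⁻¹ • w := by
    rw [smul_smul]
    refine le_smul_of_one_le_left hw ?_
    rwa [← div_eq_mul_inv, one_le_div (norm_pos_iff.mpr hw0)]
  have hunit : ‖(1 / 2 : ℝ) • (u' + v')‖ < α :=
    h u' v' hu' hv' (smul_inf_smul_eq_zero hu hv huv (by positivity) (by positivity))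
      (norm_smul_inv_norm hu0) (norm_smul_inv_norm hv0)
  calc ‖u + v‖ ≤ ‖c • (u' + v')‖ := by
        refine HasSolidNorm.solid ?_
        rw [abs_of_nonneg (add_nonneg hu hv), abs_of_nonneg (smul_nonneg hc (add_nonneg hu' hv')),
          smul_add]
        exact add_le_add (hle_smul hu hu0 huc) (hle_smul hv hv0 hvc)
    _ = 2 * c * ‖(1 / 2 : ℝ) • (u' + v')‖ := by
        rw [norm_smul, norm_smul, Real.norm_of_nonneg hc]
        norm_num
        ring
    _ ≤ 2 * α * c := by nlinarith

theorem norm_sum_le (h : QuasiUniformlyConvexWith E α) (hα : 1 / 2 ≤ α) {ι : Type*} {u : ι → E}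
    (hu : ∀ i, 0 ≤ u i) (hu1 : ∀ i, ‖u i‖ ≤ 1) (hdisj : Pairwise fun i j => u i ⊓ u j = 0)
    (m : ℕ) {s : Finset ι} (hs : #s ≤ 2 ^ m) : ‖∑ i ∈ s, u i‖ ≤ (2 * α) ^ m := by
  induction m generalizing s with
  | zero =>
    rcases Nat.le_one_iff_eq_zero_or_eq_one.mp hs with hs | hs
    · simp [card_eq_zero.mp hs]
    · obtain ⟨i, rfl⟩ := card_eq_one.mp hs
      simpa using hu1 i
  | succ m ih =>
    classical
    obtain ⟨t, hts, ht⟩ := exists_subset_card_eq (min_le_left #s (2 ^ m))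
    have hst : #(s \ t) ≤ 2 ^ m := by
      rw [card_sdiff_of_subset hts, ht]
      rw [pow_succ] at hs
      omega
    rw [← sum_sdiff hts, pow_succ, mul_comm]
    exact h.norm_add_le hα (sum_nonneg fun i _ => hu i) (sum_nonneg fun i _ => hu i)
      (sum_inf_sum_eq_zero hu hdisj sdiff_disjoint) (ih hst) (ih (ht.trans_le (min_le_right _ _)))

theorem finite_setOf_le_abs_apply (h : QuasiUniformlyConvexWith E α) (hα : 1 / 2 ≤ α)
    (hα1 : α < 1) {ι : Type*} {x : ι → E} (hx : ∀ i, ‖x i‖ ≤ 1)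
    (hdisj : Pairwise fun i j => |x i| ⊓ |x j| = 0) (φ : E →L[ℝ] ℝ) {ε : ℝ} (hε : 0 < ε) :
    {i | ε ≤ |φ (x i)|}.Finite := by
  by_contra hinf
  obtain ⟨m, hm⟩ : ∃ m : ℕ, ‖φ‖ * α ^ m < ε := by
    have := (tendsto_pow_atTop_nhds_zero_of_lt_one (by linarith) hα1).const_mul ‖φ‖
    rw [mul_zero] at this
    exact (this.eventually (gt_mem_nhds hε)).exists
  obtain ⟨s, hs, hcard⟩ := Set.Infinite.exists_subset_card_eq hinf (2 ^ m)
  have hsum : ‖∑ i ∈ s, |x i|‖ ≤ (2 * α) ^ m :=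
    h.norm_sum_le hα (fun i => abs_nonneg _) (fun i => (norm_abs_eq_norm _).trans_le (hx i))
      hdisj m hcard.le
  have : (2 : ℝ) ^ m * ε < 2 ^ m * ε := calc
    (2 : ℝ) ^ m * ε = #s • ε := by rw [hcard, nsmul_eq_mul, Nat.cast_pow, Nat.cast_ofNat]
    _ ≤ ∑ i ∈ s, |φ (x i)| := card_nsmul_le_sum s _ ε fun i hi => hs hi
    _ ≤ ‖φ‖ * ‖∑ i ∈ s, |x i|‖ := sum_abs_apply_le_opNorm_mul_norm_sum_abs φ s x
    _ ≤ ‖φ‖ * (2 * α) ^ m := by gcongr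
    _ = 2 ^ m * (‖φ‖ * α ^ m) := by ring
    _ < 2 ^ m * ε := by gcongr
  exact this.false

end QuasiUniformlyConvexWith

end QuasiUniformlyConvex

theorem dual_orderContinuous_of_quasiUniformlyConvex_general {E : Type*}
    [NormedAddCommGroup E] [Lattice E] [HasSolidNorm E] [IsOrderedAddMonoid E]
    [NormedSpace ℝ E]
    (hquc : ∃ α : ℝ, 0 < α ∧ α < 1 ∧ ∀ u v : E, 0 ≤ u → 0 ≤ v → u ⊓ v = 0 →
      ‖u‖ = 1 → ‖v‖ = 1 → ‖(1 / 2 : ℝ) • (u + v)‖ < α) :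
    DualHasOrderContinuousNorm E := by
  obtain ⟨α, -, hα1, hα⟩ := hquc
  have h : QuasiUniformlyConvexWith E (max α (1 / 2)) :=
    QuasiUniformlyConvexWith.mono hα (le_max_left _ _)
  intro x hx hdisj φ
  rw [NormedAddGroup.tendsto_nhds_zero, ← Nat.cofinite_eq_atTop]
  intro ε hε
  simpa only [eventually_cofinite, not_lt, Real.norm_eq_abs] using
    h.finite_setOf_le_abs_apply (le_max_right _ _) (max_lt hα1 (by norm_num)) hx hdisj φ hε

/-- If `E` is a quasi-uniformly convex Banach lattice (there is
`0 < α < 1` such that `‖(u+v)/2‖ < α` whenever `u, v ≥ 0` are disjoint of norm one),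
then the norm of the dual Banach lattice `E*` is order continuous. -/
theorem dual_orderContinuous_of_quasiUniformlyConvex {E : Type*}
    [NormedAddCommGroup E] [Lattice E] [HasSolidNorm E] [IsOrderedAddMonoid E]
    [NormedSpace ℝ E] [CompleteSpace E]
    (hquc : ∃ α : ℝ, 0 < α ∧ α < 1 ∧ ∀ u v : E, 0 ≤ u → 0 ≤ v → u ⊓ v = 0 →
      ‖u‖ = 1 → ‖v‖ = 1 → ‖(1 / 2 : ℝ) • (u + v)‖ < α) :
    DualHasOrderContinuousNorm E :=
  dual_orderContinuous_of_quasiUniformlyConvex_general hquc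
end

section
/- Let E be a Banach lattice and suppose (uₙ*) is a finitely disjoint sequence in the positive cone of the dual E*. If there exist u₀ ∈ E⁺ and δ>0 such that ⟨u₀, uₙ*⟩ ≥ δ for all n, then there exist a subsequence (u*_{n_k}), a disjoint sequence (v_k) in the order interval [0,u₀], and ε>0 such that ⟨v_k, u*_{n_k}⟩ ≥ ε for all k. -/
open Filter

variable {E : Type*} [NormedAddCommGroup E] [Lattice E] [HasSolidNorm E] [IsOrderedAddMonoid E]
  [NormedSpace ℝ E]

/-- Riesz–Kantorovich formula for disjointness of two positive functionals:
`φ ⊓ χ = 0` iff `inf { φ(y) + χ(x-y) : 0 ≤ y ≤ x } = 0` for all `x ≥ 0`. -/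
def DualDisjointPos (φ χ : E →L[ℝ] ℝ) : Prop :=
  ∀ x : E, 0 ≤ x → ∀ ε : ℝ, 0 < ε → ∃ y : E, 0 ≤ y ∧ y ≤ x ∧ φ y + χ (x - y) < ε

/-- A sequence of positive functionals is finitely disjoint if for each `N` it contains
`N` mutually disjoint terms. -/
def FinitelyDisjointDual (u : ℕ → E →L[ℝ] ℝ) : Prop :=
  ∀ N : ℕ, ∃ i : Fin N → ℕ, StrictMono i ∧
    ∀ k l : Fin N, k ≠ l → DualDisjointPos (u (i k)) (u (i l))

/-!
Rescale so that every functional takes the value `δ` at `u₀`. Finitely many pairwise almost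
disjoint functionals can be disjointified: they are almost carried by disjoint pieces of `u₀`, and
a positive functional can put mass `> η` on at most `δ / η` of these pieces. This pigeonhole
argument first extracts a subsequence whose members are pairwise almost disjoint on `[0, u₀]`
with errors tending to `0`, and then shows that almost every member is almost disjoint from the
limit `Ψ` of the subsequence along a free ultrafilter. The `v_k` are cut off recursively from a
decreasing residual `r` with `Ψ r > δ / 2`: a later member `h` that is almost disjoint from `Ψ`
and close to `Ψ` at `r` puts almost all of its mass on `r` into a piece on which `Ψ` is small,
so that piece can be split off from `r` while `Ψ r` stays above `δ / 2`.
-/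

open Topology Finset

theorem exists_seq_of_forall_exists {β : Type*} {P : β → Prop} {R : β → β → Prop} {a : β}
    (ha : P a) (h : ∀ b, P b → ∃ c, P c ∧ R b c) :
    ∃ f : ℕ → β, ∀ n, P (f n) ∧ R (f n) (f (n + 1)) := by
  choose! next hnext using h
  have hP : ∀ n, P (next^[n] a) := by
    intro n
    induction n with
    | zero => exact ha
    | succ n ih => rw [Function.iterate_succ_apply']; exact (hnext _ ih).1
  refine ⟨fun n => next^[n] a, fun n => ⟨hP n, ?_⟩⟩
  show R (next^[n] a) (next^[n + 1] a)
  rw [Function.iterate_succ_apply']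
  exact (hnext _ (hP n)).2

theorem Ultrafilter.exists_forall_tendsto_of_mem_Icc {ι X : Type*} (𝒰 : Ultrafilter ι)
    (f : ι → X → ℝ) {s : Set X} {a b : ℝ} (hf : ∀ x ∈ s, ∀ i, f i x ∈ Set.Icc a b) :
    ∃ Ψ : X → ℝ, ∀ x ∈ s, Tendsto (fun i => f i x) 𝒰 (𝓝 (Ψ x)) := by
  have : ∀ x, ∃ c, x ∈ s → Tendsto (fun i => f i x) 𝒰 (𝓝 c) := by
    intro x
    by_cases hx : x ∈ s
    · obtain ⟨c, -, hc⟩ := isCompact_Icc.ultrafilter_le_nhds (𝒰.map fun i => f i x)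
        (le_principal_iff.2 (mem_map.2 (univ_mem' (hf x hx))))
      exact ⟨c, fun _ => hc⟩
    · exact ⟨0, fun h => absurd h hx⟩
  choose Ψ hΨ using this
  exact ⟨Ψ, hΨ⟩

theorem pairwise_inf_eq_zero_of_antitone {β : Type*} [Lattice β] [Zero β] {v r : ℕ → β}
    (hv : ∀ n, 0 ≤ v n) (hr : Antitone r) (hvr : ∀ n, v (n + 1) ≤ r n) (hd : ∀ n, v n ⊓ r n = 0) :
    Pairwise fun m n => v m ⊓ v n = 0 := by
  have hlt : ∀ m n, m < n → v m ⊓ v n = 0 := by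
    intro m n hmn
    obtain ⟨k, rfl⟩ := Nat.exists_eq_add_of_lt hmn
    refine le_antisymm ?_ (le_inf (hv m) (hv _))
    calc v m ⊓ v (m + k + 1) ≤ v m ⊓ r m :=
          inf_le_inf_left _ ((hvr _).trans (hr (Nat.le_add_right m k)))
      _ = 0 := hd m
  intro m n hmn
  rcases hmn.lt_or_gt with h | h
  · exact hlt m n h
  · rw [inf_comm]; exact hlt n m h

section LatticeOrderedGroup

variable {α ι : Type*} [AddCommGroup α] [Lattice α] [IsOrderedAddMonoid α]

theorem posPart_sub_inf_posPart_sub (a b : α) : (a - b)⁺ ⊓ (b - a)⁺ = 0 := by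
  rw [← neg_sub a b]
  exact posPart_inf_negPart_eq_zero (a - b)

theorem Finset.sum_le_of_pairwise_inf_eq_zero {w : ι → α} {c : α} (s : Finset ι) (hc : 0 ≤ c)
    (hw : ∀ i ∈ s, w i ≤ c) (hd : (s : Set ι).Pairwise fun i j => w i ⊓ w j = 0) :
    ∑ i ∈ s, w i ≤ c := by
  classical
  induction s using Finset.induction_on generalizing c with
  | empty => simpa using hc
  | insert a s ha ih =>
    rw [sum_insert ha, ← le_sub_iff_add_le']
    refine ih (sub_nonneg.2 (hw a (mem_insert_self a s))) (fun i hi => ?_)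
      (hd.mono (coe_subset.2 (subset_insert a s)))
    -- disjoint elements add up to their supremum
    rw [le_sub_iff_add_le, ← inf_add_sup,
      hd (mem_insert_of_mem hi) (mem_insert_self a s) (ne_of_mem_of_not_mem hi ha), zero_add]
    exact sup_le (hw i (mem_insert_of_mem hi)) (hw a (mem_insert_self a s))

variable {F : Type*} [FunLike F α ℝ] [AddMonoidHomClass F α ℝ]

theorem Finset.sum_apply_le_of_pairwise_inf_eq_zero {φ : F} (hφ : Monotone φ) {w : ι → α}
    {c : α} (s : Finset ι) (hc : 0 ≤ c) (hw : ∀ i ∈ s, w i ≤ c)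
    (hd : (s : Set ι).Pairwise fun i j => w i ⊓ w j = 0) :
    ∑ i ∈ s, φ (w i) ≤ φ c := by
  rw [← map_sum]
  exact hφ (s.sum_le_of_pairwise_inf_eq_zero hc hw hd)

theorem card_filter_lt_mul_le [Fintype ι] {φ : F} (hφ : Monotone φ) {w : ι → α} {c : α}
    (hc : 0 ≤ c) (hw : ∀ i, w i ≤ c) (hd : Pairwise fun i j => w i ⊓ w j = 0) (η : ℝ) :
    (#{i | η < φ (w i)} : ℝ) * η ≤ φ c := by
  classical
  calc (#{i | η < φ (w i)} : ℝ) * η ≤ ∑ i ∈ {i | η < φ (w i)}, φ (w i) := by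
        rw [← nsmul_eq_mul]
        exact card_nsmul_le_sum _ _ _ fun i hi => (mem_filter.1 hi).2.le
    _ ≤ φ c := sum_apply_le_of_pairwise_inf_eq_zero hφ _ hc (fun i _ => hw i) (hd.set_pairwise _)

end LatticeOrderedGroup

section AlmostDisjoint

variable {α ι F : Type*} [AddCommGroup α] [Lattice α] [FunLike F α ℝ] {u₀ : α} {ρ : ℝ}

/-- A quantitative form of disjointness of `φ` and `χ`, tested on `[0, u₀]` only. -/
def AlmostDisjointOn (u₀ : α) (ρ : ℝ) (φ χ : α → ℝ) : Prop :=
  ∃ y ∈ Set.Icc 0 u₀, φ (u₀ - y) ≤ ρ ∧ χ y ≤ ρ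

def FinitelyAlmostDisjointOn (u₀ : α) (g : ℕ → F) : Prop :=
  ∀ N : ℕ, ∀ ρ > 0, ∃ i : Fin N → ℕ, Function.Injective i ∧
    Pairwise fun k l => AlmostDisjointOn u₀ ρ (g (i k)) (g (i l))

def EventuallyAlmostDisjointOn (u₀ : α) (g : ℕ → F) : Prop :=
  ∀ ρ > 0, ∃ N, ∀ s t, N ≤ s → N ≤ t → s ≠ t → AlmostDisjointOn u₀ ρ (g s) (g t)

theorem AlmostDisjointOn.mono {φ χ : α → ℝ} {ρ' : ℝ} (h : AlmostDisjointOn u₀ ρ φ χ)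
    (hρ : ρ ≤ ρ') : AlmostDisjointOn u₀ ρ' φ χ :=
  let ⟨y, hy, hφ, hχ⟩ := h
  ⟨y, hy, hφ.trans hρ, hχ.trans hρ⟩

variable [IsOrderedAddMonoid α]

theorem AlmostDisjointOn.symm {φ χ : α → ℝ} (h : AlmostDisjointOn u₀ ρ φ χ) :
    AlmostDisjointOn u₀ ρ χ φ := by
  obtain ⟨y, ⟨hy0, hyu⟩, hφ, hχ⟩ := h
  exact ⟨u₀ - y, ⟨sub_nonneg.2 hyu, sub_le_self u₀ hy0⟩, by rwa [sub_sub_cancel], hφ⟩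

theorem AlmostDisjointOn.of_apply_le {φ χ φ' χ' : α → ℝ} (h : AlmostDisjointOn u₀ ρ φ χ)
    (hφ : ∀ x, 0 ≤ x → φ' x ≤ φ x) (hχ : ∀ x, 0 ≤ x → χ' x ≤ χ x) :
    AlmostDisjointOn u₀ ρ φ' χ' := by
  obtain ⟨y, ⟨hy0, hyu⟩, hφy, hχy⟩ := h
  exact ⟨y, ⟨hy0, hyu⟩, (hφ _ (sub_nonneg.2 hyu)).trans hφy, (hχ y hy0).trans hχy⟩

theorem FinitelyAlmostDisjointOn.of_apply_le {g u : ℕ → F} (h : FinitelyAlmostDisjointOn u₀ u)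
    (hgu : ∀ n x, 0 ≤ x → g n x ≤ u n x) : FinitelyAlmostDisjointOn u₀ g := fun N ρ hρ => by
  obtain ⟨i, hi, hpair⟩ := h N ρ hρ
  exact ⟨i, hi, fun k l hkl => (hpair hkl).of_apply_le (hgu _) (hgu _)⟩

variable [AddMonoidHomClass F α ℝ]

theorem exists_pairwise_inf_eq_zero_of_almostDisjointOn [Fintype ι] {ψ : ι → F}
    (hψ : ∀ i, Monotone (ψ i)) (hu₀ : 0 ≤ u₀) (hρ : 0 ≤ ρ)
    (h : Pairwise fun i j => AlmostDisjointOn u₀ ρ (ψ i) (ψ j)) :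
    ∃ w : ι → α, (∀ i, w i ∈ Set.Icc 0 u₀) ∧ Pairwise (fun i j => w i ⊓ w j = 0) ∧
      ∀ i, ψ i (u₀ - w i) ≤ 2 * Fintype.card ι * ρ := by
  classical
  have hy : ∀ i j, ∃ y ∈ Set.Icc 0 u₀, i ≠ j → ψ i (u₀ - y) ≤ ρ ∧ ψ j y ≤ ρ := by
    intro i j
    by_cases hij : i = j
    · exact ⟨0, ⟨le_rfl, hu₀⟩, fun h => absurd hij h⟩
    · obtain ⟨y, hy, hi, hj⟩ := h hij
      exact ⟨y, hy, fun _ => ⟨hi, hj⟩⟩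
  choose y hy hψy using hy
  -- `w i ≤ (y i j - y j i)⁺` and `w j ≤ (y j i - y i j)⁺` are disjoint, and `ψ i ≤ 2 ρ` on `e i j`.
  let e i j := (u₀ - y i j) + y j i
  have he : ∀ i j, 0 ≤ e i j := fun i j => add_nonneg (sub_nonneg.2 (hy i j).2) (hy j i).1
  let w i := (u₀ - ∑ j ∈ univ.erase i, e i j)⁺
  have hw : ∀ i j, i ≠ j → w i ≤ (y i j - y j i)⁺ := by
    intro i j hij
    refine posPart_mono ?_
    calc u₀ - ∑ k ∈ univ.erase i, e i k ≤ u₀ - e i j :=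
          sub_le_sub_left (single_le_sum (fun k _ => he i k) (mem_erase.2 ⟨hij.symm, mem_univ j⟩)) _
      _ = y i j - y j i := by simp only [e]; abel
  refine ⟨w, fun i => ⟨posPart_nonneg _, sup_le (sub_le_self _ (sum_nonneg fun j _ => he i j)) hu₀⟩,
    fun i j hij => le_antisymm ?_ (le_inf (posPart_nonneg _) (posPart_nonneg _)), fun i => ?_⟩
  · calc w i ⊓ w j ≤ (y i j - y j i)⁺ ⊓ (y j i - y i j)⁺ :=
          inf_le_inf (hw i j hij) (hw j i hij.symm)
      _ = 0 := posPart_sub_inf_posPart_sub _ _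
  · have hcard : (#(univ.erase i) : ℝ) ≤ Fintype.card ι := by exact_mod_cast card_erase_le
    calc ψ i (u₀ - w i) ≤ ψ i (∑ j ∈ univ.erase i, e i j) :=
          hψ i (sub_le_comm.1 (le_posPart _))
      _ = ∑ j ∈ univ.erase i, (ψ i (u₀ - y i j) + ψ i (y j i)) := by simp only [e, map_sum, map_add]
      _ ≤ ∑ j ∈ univ.erase i, 2 * ρ := sum_le_sum fun j hj => by
          have := hψy i j (ne_of_mem_erase hj).symm
          have := hψy j i (ne_of_mem_erase hj)
          linarith
      _ ≤ 2 * Fintype.card ι * ρ := by rw [sum_const, nsmul_eq_mul]; nlinarith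

theorem FinitelyAlmostDisjointOn.exists_gt_forall_almostDisjointOn {g : ℕ → F}
    (hg : FinitelyAlmostDisjointOn u₀ g) (hmono : ∀ n, Monotone (g n)) (hu₀ : 0 ≤ u₀)
    (P : Finset ℕ) (b : ℕ) {η : ℝ} (hη : 0 < η) :
    ∃ j, b < j ∧ ∀ s ∈ P, AlmostDisjointOn u₀ η (g j) (g s) := by
  classical
  set N := ∑ s ∈ P, ⌊g s u₀ / η⌋₊ + b + 2
  obtain ⟨i, hi, hpair⟩ := hg N (η / (2 * N)) (by positivity)
  obtain ⟨w, hw, hdisj, herr⟩ :=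
    exists_pairwise_inf_eq_zero_of_almostDisjointOn (fun k => hmono (i k)) hu₀ (by positivity) hpair
  let bad := P.biUnion (fun s => {k | η < g s (w k)}) ∪ ({k | i k ≤ b} : Finset (Fin N))
  have hfew : ∀ s, #{k | η < g s (w k)} ≤ ⌊g s u₀ / η⌋₊ := fun s =>
    Nat.le_floor ((le_div_iff₀ hη).2
      (card_filter_lt_mul_le (hmono s) hu₀ (fun k => (hw k).2) hdisj η))
  have hsmall : #{k | i k ≤ b} ≤ b + 1 := by
    refine (card_le_card_of_injOn i (fun k hk => ?_) hi.injOn).trans_eq (card_range (b + 1))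
    exact mem_range.2 (Nat.lt_succ_of_le (mem_filter.1 hk).2)
  have hbad : #bad < #(univ : Finset (Fin N)) := by
    calc #bad ≤ ∑ s ∈ P, ⌊g s u₀ / η⌋₊ + (b + 1) :=
          (card_union_le _ _).trans
            (add_le_add (card_biUnion_le.trans (sum_le_sum fun s _ => hfew s)) hsmall)
      _ < #(univ : Finset (Fin N)) := by rw [card_univ, Fintype.card_fin]; omega
  obtain ⟨k, -, hk⟩ := exists_mem_notMem_of_card_lt_card hbad
  simp only [bad, mem_union, mem_biUnion, mem_filter, mem_univ, true_and, not_or, not_exists,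
    not_and, not_lt, not_le] at hk
  refine ⟨i k, hk.2, fun s hs => ⟨w k, hw k, ?_, hk.1 s hs⟩⟩
  have hN : (N : ℝ) ≠ 0 := by positivity
  calc g (i k) (u₀ - w k) ≤ 2 * Fintype.card (Fin N) * (η / (2 * N)) := herr k
    _ = η := by rw [Fintype.card_fin]; field_simp

theorem FinitelyAlmostDisjointOn.exists_strictMono_eventuallyAlmostDisjointOn {g : ℕ → F}
    (hg : FinitelyAlmostDisjointOn u₀ g) (hmono : ∀ n, Monotone (g n)) (hu₀ : 0 ≤ u₀) :
    ∃ f : ℕ → ℕ, StrictMono f ∧ EventuallyAlmostDisjointOn u₀ fun k => g (f k) := by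
  obtain ⟨f, -, hf⟩ := exists_seq_of_forall_finset_exists (fun _ => True)
    (fun m n : ℕ => m < n ∧ AlmostDisjointOn u₀ (1 / ((m : ℝ) + 1)) (g n) (g m)) fun P _ => by
      obtain ⟨j, hj, hjP⟩ := hg.exists_gt_forall_almostDisjointOn hmono hu₀ P (P.sup id)
        (η := 1 / ((P.sup id : ℕ) + 1)) (by positivity)
      refine ⟨j, trivial, fun m hm => ⟨(le_sup (f := id) hm).trans_lt hj, (hjP m hm).mono ?_⟩⟩
      gcongr
      exact_mod_cast le_sup (f := id) hm
  have hfm : StrictMono f := fun m n hmn => (hf m n hmn).1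
  refine ⟨f, hfm, fun ρ hρ => ?_⟩
  obtain ⟨N, hN⟩ := exists_nat_one_div_lt hρ
  have key : ∀ s t, N ≤ s → s < t → AlmostDisjointOn u₀ ρ (g (f t)) (g (f s)) := by
    intro s t hs hst
    refine (hf s t hst).2.mono (le_of_lt (lt_of_le_of_lt ?_ hN))
    gcongr
    exact_mod_cast hs.trans (hfm.id_le s)
  refine ⟨N, fun s t hs ht hst => ?_⟩
  rcases hst.lt_or_gt with h | h
  · exact (key s t hs h).symm
  · exact key t s ht h

theorem EventuallyAlmostDisjointOn.eventually_almostDisjointOn_of_tendsto {h : ℕ → F}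
    (hsep : EventuallyAlmostDisjointOn u₀ h) (hmono : ∀ t, Monotone (h t)) (hu₀ : 0 ≤ u₀)
    {l : Filter ℕ} [l.NeBot] {Ψ : α → ℝ}
    (hΨ : ∀ w ∈ Set.Icc 0 u₀, Tendsto (fun t => h t w) l (𝓝 (Ψ w))) (hρ : 0 < ρ) :
    ∀ᶠ t in atTop, AlmostDisjointOn u₀ ρ (h t) Ψ := by
  set K := ⌊Ψ u₀ / ρ⌋₊ + 1
  obtain ⟨N, hN⟩ := hsep (ρ / (2 * K)) (by positivity)
  by_contra hbad
  obtain ⟨φ, hφ, hφbad⟩ := extraction_of_frequently_atTop (not_eventually.1 hbad)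
  let i : Fin K → ℕ := fun k => φ (N + k)
  have hiN : ∀ k, N ≤ i k := fun k => (Nat.le_add_right N k).trans (hφ.id_le _)
  have hi : Function.Injective i :=
    hφ.injective.comp ((add_right_injective N).comp Fin.val_injective)
  obtain ⟨w, hw, hdisj, herr⟩ := exists_pairwise_inf_eq_zero_of_almostDisjointOn
    (fun k => hmono (i k)) hu₀ (by positivity) fun k l hkl => hN _ _ (hiN k) (hiN l) (hi.ne hkl)
  have hlarge : ∀ k, ρ < Ψ (w k) := by
    intro k
    by_contra hle
    refine hφbad (N + k) ⟨w k, hw k, (herr k).trans_eq ?_, not_lt.1 hle⟩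
    have hK : (K : ℝ) ≠ 0 := Nat.cast_ne_zero.2 (Nat.succ_ne_zero _)
    rw [Fintype.card_fin]
    field_simp
  have hsum : ∑ k, Ψ (w k) ≤ Ψ u₀ :=
    le_of_tendsto_of_tendsto (tendsto_finsetSum _ fun k _ => hΨ _ (hw k)) (hΨ u₀ ⟨hu₀, le_rfl⟩)
      (Eventually.of_forall fun t => sum_apply_le_of_pairwise_inf_eq_zero (hmono t) _ hu₀
        (fun k _ => (hw k).2) (hdisj.set_pairwise _))
  have hK : (K : ℝ) * ρ < ∑ k, Ψ (w k) := by
    simpa using sum_lt_sum_of_nonempty univ_nonempty fun k _ => hlarge k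
  have hΨK : Ψ u₀ < K * ρ := by
    rw [← div_lt_iff₀ hρ]
    exact_mod_cast Nat.lt_floor_add_one _
  linarith

theorem exists_split_of_tendsto {h : ℕ → F} (hmono : ∀ t, Monotone (h t)) {l : Filter ℕ}
    [l.NeBot] (hl : l ≤ atTop) {Ψ : α → ℝ}
    (hΨ : ∀ w ∈ Set.Icc 0 u₀, Tendsto (fun t => h t w) l (𝓝 (Ψ w)))
    (hAD : ∀ ρ > 0, ∀ᶠ t in atTop, AlmostDisjointOn u₀ ρ (h t) Ψ) {r : α}
    (hr : r ∈ Set.Icc 0 u₀) {c : ℝ} (hc : c < Ψ r) (N : ℕ) :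
    ∃ t, N < t ∧ ∃ v r', 0 ≤ v ∧ v ≤ r ∧ 0 ≤ r' ∧ r' ≤ r ∧ v ⊓ r' = 0 ∧
      c ≤ h t v ∧ c < Ψ r' := by
  set ρ := (Ψ r - c) / 3
  have hρ : 0 < ρ := div_pos (sub_pos.2 hc) three_pos
  have hcρ : c = Ψ r - 3 * ρ := by simp only [ρ]; ring
  obtain ⟨t, ⟨y, ⟨hy0, hyu⟩, hty, hΨy⟩, htr, hNt⟩ := (((hAD ρ hρ).filter_mono hl).and
    (((hΨ r hr).eventually (lt_mem_nhds (sub_lt_self _ hρ))).and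
      ((eventually_gt_atTop N).filter_mono hl))).exists
  -- `r = a + b`, where `Ψ` is small on `a` and `h t` is small on `b`.
  set a := y ⊓ r
  set b := r - a
  have ha : a ∈ Set.Icc 0 u₀ := ⟨le_inf hy0 hr.1, inf_le_right.trans hr.2⟩
  have hb0 : 0 ≤ b := sub_nonneg.2 inf_le_right
  have hb : b ≤ u₀ - y := by
    simp only [b, a, sub_inf, sub_self]
    exact sup_le (sub_le_sub_right hr.2 y) (sub_nonneg.2 hyu)
  have hΨa : Ψ a ≤ ρ := (le_of_tendsto_of_tendsto (hΨ a ha) (hΨ y ⟨hy0, hyu⟩)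
    (Eventually.of_forall fun t => hmono t inf_le_left)).trans hΨy
  have hsplit : ∀ t, h t (b - a) = h t r - 2 * h t a := fun t => by
    simp only [b, map_sub]; ring
  have hba : (b - a)⁺ ∈ Set.Icc 0 u₀ :=
    ⟨posPart_nonneg _,
      sup_le (((sub_le_self b ha.1).trans (sub_le_self r ha.1)).trans hr.2) (hr.1.trans hr.2)⟩
  refine ⟨t, hNt, (a - b)⁺, (b - a)⁺, posPart_nonneg _, ?_, posPart_nonneg _, ?_,
    posPart_sub_inf_posPart_sub a b, ?_, ?_⟩
  · exact (sup_le (sub_le_self a hb0) ha.1).trans inf_le_right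
  · exact (sup_le (sub_le_self b ha.1) hb0).trans (sub_le_self r ha.1)
  · have hab : h t (a - b) = h t r - 2 * h t b := by simp only [b, map_sub]; ring
    have := hmono t hb
    calc c ≤ h t (a - b) := by rw [hab]; linarith
      _ ≤ h t (a - b)⁺ := hmono t (le_posPart _)
  · have hlim : Tendsto (fun t => h t (b - a)) l (𝓝 (Ψ r - 2 * Ψ a)) := by
      simp only [hsplit]
      exact (hΨ r hr).sub ((hΨ a ha).const_mul 2)
    calc c < Ψ r - 2 * Ψ a := by linarith
      _ ≤ Ψ (b - a)⁺ := le_of_tendsto_of_tendsto hlim (hΨ _ hba)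
          (Eventually.of_forall fun t => hmono t (le_posPart _))

theorem EventuallyAlmostDisjointOn.exists_strictMono_pairwise_inf_eq_zero {h : ℕ → F}
    (hsep : EventuallyAlmostDisjointOn u₀ h) (hmono : ∀ t, Monotone (h t)) (hu₀ : 0 ≤ u₀)
    {δ : ℝ} (hδ : 0 < δ) (hhu₀ : ∀ t, h t u₀ = δ) :
    ∃ τ : ℕ → ℕ, StrictMono τ ∧ ∃ v : ℕ → α, (∀ k, v k ∈ Set.Icc 0 u₀) ∧
      Pairwise (fun k l => v k ⊓ v l = 0) ∧ ∀ k, δ / 2 ≤ h (τ k) (v k) := by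
  obtain ⟨𝒰, h𝒰⟩ := exists_ultrafilter_le (atTop : Filter ℕ)
  obtain ⟨Ψ, hΨ⟩ := 𝒰.exists_forall_tendsto_of_mem_Icc (fun t w => h t w) (s := Set.Icc 0 u₀)
    (a := 0) (b := δ)
    fun w hw t => ⟨by simpa using hmono t hw.1, (hmono t hw.2).trans_eq (hhu₀ t)⟩
  have hΨu₀ : Ψ u₀ = δ :=
    tendsto_nhds_unique (hΨ u₀ ⟨hu₀, le_rfl⟩) (by simp [hhu₀])
  have hAD := fun ρ (hρ : 0 < ρ) => hsep.eventually_almostDisjointOn_of_tendsto hmono hu₀ hΨ hρ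
  -- States `(t, v, r)`: the last index and piece chosen, and the residual `r` with `Ψ r > δ / 2`.
  obtain ⟨f, hf⟩ := exists_seq_of_forall_exists
    (P := fun s : ℕ × α × α => s.2.2 ∈ Set.Icc 0 u₀ ∧ δ / 2 < Ψ s.2.2)
    (R := fun s s' => s.1 < s'.1 ∧ 0 ≤ s'.2.1 ∧ s'.2.1 ≤ s.2.2 ∧ s'.2.2 ≤ s.2.2 ∧
      s'.2.1 ⊓ s'.2.2 = 0 ∧ δ / 2 ≤ h s'.1 s'.2.1)
    (a := (0, 0, u₀)) ⟨⟨hu₀, le_rfl⟩, by linarith⟩ fun ⟨t, _, r⟩ ⟨hr, hΨr⟩ => by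
      obtain ⟨t', ht', v', r', hv'0, hv'r, hr'0, hr'r, hd, hv', hΨr'⟩ :=
        exists_split_of_tendsto hmono h𝒰 hΨ hAD hr hΨr t
      exact ⟨(t', v', r'), ⟨⟨hr'0, hr'r.trans hr.2⟩, hΨr'⟩, ht', hv'0, hv'r, hr'r, hd, hv'⟩
  choose hP ht hv0 hvr hrr hd hval using hf
  refine ⟨fun k => (f (k + 1)).1, strictMono_nat_of_lt_succ fun k => ht (k + 1),
    fun k => (f (k + 1)).2.1, fun k => ⟨hv0 k, (hvr k).trans (hP k).1.2⟩,
    pairwise_inf_eq_zero_of_antitone hv0 (antitone_nat_of_succ_le fun k => hrr (k + 1))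
      (fun k => hvr (k + 1)) hd, hval⟩

end AlmostDisjoint

section DualDisjoint

variable {V : Type*} [NormedAddCommGroup V] [Lattice V] [IsOrderedAddMonoid V] [NormedSpace ℝ V]

theorem DualDisjointPos.almostDisjointOn {φ χ : V →L[ℝ] ℝ} (h : DualDisjointPos φ χ)
    (hφ : ∀ x, 0 ≤ x → 0 ≤ φ x) (hχ : ∀ x, 0 ≤ x → 0 ≤ χ x) {u₀ : V} (hu₀ : 0 ≤ u₀) {ε : ℝ}
    (hε : 0 < ε) : AlmostDisjointOn u₀ ε χ φ := by
  obtain ⟨y, hy0, hyu, hlt⟩ := h u₀ hu₀ ε hε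
  have := hφ y hy0
  have := hχ (u₀ - y) (sub_nonneg.2 hyu)
  exact ⟨y, ⟨hy0, hyu⟩, by linarith, by linarith⟩

theorem FinitelyDisjointDual.finitelyAlmostDisjointOn {u : ℕ → V →L[ℝ] ℝ}
    (h : FinitelyDisjointDual u) (hu : ∀ n x, 0 ≤ x → 0 ≤ u n x) {u₀ : V} (hu₀ : 0 ≤ u₀) :
    FinitelyAlmostDisjointOn u₀ u := fun N ρ hρ => by
  obtain ⟨i, hi, hdisj⟩ := h N
  exact ⟨i, hi.injective, fun k l hkl => (hdisj l k hkl.symm).almostDisjointOn (hu _) (hu _) hu₀ hρ⟩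

end DualDisjoint

theorem exists_disjoint_witness_subsequence_general {E : Type*} [NormedAddCommGroup E] [Lattice E]
    [IsOrderedAddMonoid E]
    [NormedSpace ℝ E]
    (u : ℕ → E →L[ℝ] ℝ) (hupos : ∀ n, ∀ x : E, 0 ≤ x → 0 ≤ u n x)
    (hfd : FinitelyDisjointDual u)
    (u₀ : E) (hu₀ : 0 ≤ u₀) (δ : ℝ) (hδ : 0 < δ) (hlb : ∀ n, δ ≤ u n u₀) :
    ∃ n : ℕ → ℕ, StrictMono n ∧ ∃ v : ℕ → E,
      (∀ k, 0 ≤ v k ∧ v k ≤ u₀) ∧ (∀ k l, k ≠ l → v k ⊓ v l = 0) ∧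
      ∃ ε : ℝ, 0 < ε ∧ ∀ k, ε ≤ u (n k) (v k) := by
  let g : ℕ → E →L[ℝ] ℝ := fun n => (δ / u n u₀) • u n
  have hscale : ∀ n, 0 ≤ δ / u n u₀ ∧ δ / u n u₀ ≤ 1 := fun n =>
    ⟨div_nonneg hδ.le (hδ.le.trans (hlb n)), div_le_one_of_le₀ (hlb n) (hδ.le.trans (hlb n))⟩
  have hgu : ∀ n x, 0 ≤ x → g n x ≤ u n x := fun n x hx =>
    mul_le_of_le_one_left (hupos n x hx) (hscale n).2
  have hg : ∀ n, Monotone (g n) := fun n =>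
    (monotone_iff_map_nonneg _).2 fun x hx => mul_nonneg (hscale n).1 (hupos n x hx)
  have hgu₀ : ∀ n, g n u₀ = δ := fun n => div_mul_cancel₀ δ (hδ.trans_le (hlb n)).ne'
  obtain ⟨f, hf, hsep⟩ := ((hfd.finitelyAlmostDisjointOn hupos hu₀).of_apply_le hgu
    ).exists_strictMono_eventuallyAlmostDisjointOn hg hu₀
  obtain ⟨τ, hτ, v, hv, hdisj, hval⟩ :=
    hsep.exists_strictMono_pairwise_inf_eq_zero (fun k => hg (f k)) hu₀ hδ fun k => hgu₀ (f k)
  exact ⟨f ∘ τ, hf.comp hτ, v, hv, hdisj, δ / 2, half_pos hδ,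
    fun k => (hval k).trans (hgu _ _ (hv k).1)⟩

/-- Let `E` be a Banach lattice and `(uₙ*)` a finitely disjoint sequence
in `(E*)⁺`.  If there are `u₀ ∈ E⁺` and `δ > 0` with `⟨u₀, uₙ*⟩ ≥ δ` for all `n`, then
there exist a subsequence `(u*_{n_k})`, a disjoint sequence `(v_k)` in `[0,u₀]` and
`ε > 0` such that `⟨v_k, u*_{n_k}⟩ ≥ ε` for all `k`. -/
theorem exists_disjoint_witness_subsequence {E : Type*} [NormedAddCommGroup E] [Lattice E]
    [HasSolidNorm E] [IsOrderedAddMonoid E]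
    [NormedSpace ℝ E] [CompleteSpace E]
    (u : ℕ → E →L[ℝ] ℝ) (hupos : ∀ n, ∀ x : E, 0 ≤ x → 0 ≤ u n x)
    (hfd : FinitelyDisjointDual u)
    (u₀ : E) (hu₀ : 0 ≤ u₀) (δ : ℝ) (hδ : 0 < δ) (hlb : ∀ n, δ ≤ u n u₀) :
    ∃ n : ℕ → ℕ, StrictMono n ∧ ∃ v : ℕ → E,
      (∀ k, 0 ≤ v k ∧ v k ≤ u₀) ∧ (∀ k l, k ≠ l → v k ⊓ v l = 0) ∧
      ∃ ε : ℝ, 0 < ε ∧ ∀ k, ε ≤ u (n k) (v k) :=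
  exists_disjoint_witness_subsequence_general u hupos hfd u₀ hu₀ δ hδ hlb
end

section
/- Let (Ω,Σ,μ) be a σ-finite atomless measure space and let 0<α≤∞. Suppose u,v ∈ L₀(μ)⁺ satisfy u ∧ v = 0 and f ∈ L₀(0,∞)⁺ is such that ∫₀^t u*(s) ds ≤ ∫₀^t f*(s) ds and ∫₀^t v*(s) ds ≤ ∫₀^t f*(s) ds for all 0 ≤ t < α. Then ∫₀^t (u+v)*(s) ds ≤ ∫₀^t f*(s/2) ds for all 0 ≤ t < α. -/
open MeasureTheory Filter ENNReal

/-- Decreasing rearrangement: `f*(t) = inf {s ≥ 0 : μ(|f| > s) ≤ t}`, valued in `ℝ≥0∞`. -/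
noncomputable def decRear {α : Type*} [MeasurableSpace α] (μ : Measure α) (f : α → ℝ)
    (t : ℝ) : ℝ≥0∞ :=
  sInf {s : ℝ≥0∞ | μ {x | s < (‖f x‖₊ : ℝ≥0∞)} ≤ ENNReal.ofReal t}

/-!
By the layer-cake formula,
`∫₀ᵗ g* = ∫₀^∞ min (d_g λ) t dλ` and `∫₀ᵗ f*(s/2) ds = ∫₀^∞ min (2 d_f λ) t dλ`.
Disjointness of `u` and `v` gives `d_{u+v} = d_u + d_v`. Since `d_u` and `d_v` are antitone, `t`
splits as `A + B` with `min (d_u + d_v) t ≤ min d_u A + min d_v B` pointwise: take `A` between the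
values of `d_u` on the two sides of the threshold where `d_u + d_v` crosses `t`. Integrating and
applying the hypotheses at `A` and `B` bounds `∫₀ᵗ (u+v)*` by
`∫₀^∞ (min d_f A + min d_f B) ≤ ∫₀^∞ min (2 d_f) t`.
-/

open Set

theorem ENNReal.exists_add_eq_of_add_le_of_le_add {p p' q q' T : ℝ≥0∞} (hT : T ≠ ⊤) (hp : p ≤ p')
    (hq : q ≤ q') (hlo : p + q ≤ T) (hhi : T ≤ p' + q') :
    ∃ A B, A + B = T ∧ A ∈ Icc p p' ∧ B ∈ Icc q q' := by
  have hqT : q ≤ T := le_add_self.trans hlo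
  have hqfin : q ≠ ⊤ := ne_top_of_le_ne_top hT hqT
  set A := max p (T - q')
  have hA : A ≤ T - q :=
    max_le ((ENNReal.le_sub_iff_add_le_right hqfin hqT).2 hlo) (tsub_le_tsub_left hq T)
  have hAT : A ≤ T := hA.trans tsub_le_self
  refine ⟨A, T - A, add_tsub_cancel_of_le hAT, ⟨le_max_left _ _, max_le hp ?_⟩, ?_, ?_⟩
  · exact tsub_le_iff_right.2 hhi
  · exact ENNReal.le_sub_of_add_le_left (ne_top_of_le_ne_top hT hAT)
      ((ENNReal.le_sub_iff_add_le_right hqfin hqT).1 hA)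
  · exact (tsub_le_tsub_left (le_max_right _ _) T).trans tsub_tsub_le

theorem ENNReal.exists_add_eq_min_add_le_min_add_min {ι : Type*} [LinearOrder ι] {P Q : ι → ℝ≥0∞}
    (hP : Antitone P) (hQ : Antitone Q) {T : ℝ≥0∞} (hT : T ≠ ⊤) :
    ∃ A B, A + B = T ∧ ∀ i, min (P i + Q i) T ≤ min (P i) A + min (Q i) B := by
  set S := {i | P i + Q i ≤ T}
  have hlt : ∀ i ∈ S, ∀ j ∉ S, j < i := fun i hi j hj =>
    lt_of_not_ge fun hij => hj ((add_le_add (hP hij) (hQ hij)).trans hi)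
  have hlo : (⨆ i ∈ S, P i) + ⨆ i ∈ S, Q i ≤ T := by
    rcases S.eq_empty_or_nonempty with hS | hS
    · simp [hS]
    refine ENNReal.biSup_add_biSup_le hS hS fun i hi j hj => ?_
    rcases le_total i j with hij | hij
    · exact (add_le_add le_rfl (hQ hij)).trans hi
    · exact (add_le_add (hP hij) le_rfl).trans hj
  have hhi : T ≤ (⨅ i ∉ S, P i) + ⨅ i ∉ S, Q i := by
    refine ENNReal.le_iInf₂_add_iInf₂ fun i hi j hj => ?_
    rcases le_total i j with hij | hij
    · exact (not_le.1 hj).le.trans (add_le_add (hP hij) le_rfl)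
    · exact (not_le.1 hi).le.trans (add_le_add le_rfl (hQ hij))
  obtain ⟨A, B, hAB, ⟨hpA, hAp⟩, ⟨hqB, hBq⟩⟩ := ENNReal.exists_add_eq_of_add_le_of_le_add hT
    (iSup₂_le fun i hi => le_iInf₂ fun j hj => hP (hlt i hi j hj).le)
    (iSup₂_le fun i hi => le_iInf₂ fun j hj => hQ (hlt i hi j hj).le) hlo hhi
  refine ⟨A, B, hAB, fun i => ?_⟩
  by_cases hi : i ∈ S
  · rw [min_eq_left ((le_iSup₂ (f := fun i _ => P i) i hi).trans hpA),
      min_eq_left ((le_iSup₂ (f := fun i _ => Q i) i hi).trans hqB)]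
    exact min_le_left _ _
  · rw [min_eq_right (hAp.trans (iInf₂_le i hi)), min_eq_right (hBq.trans (iInf₂_le i hi)), hAB]
    exact min_le_right _ _

theorem volume_setOf_ofReal_lt_inter_Ioi (c : ℝ≥0∞) :
    volume ({s : ℝ | ENNReal.ofReal s < c} ∩ Ioi 0) = c := by
  rcases eq_or_ne c ⊤ with rfl | hc
  · simp [Real.volume_Ioi]
  · have : {s : ℝ | ENNReal.ofReal s < c} ∩ Ioi 0 = Ioo 0 c.toReal := by
      ext s
      simp only [mem_inter_iff, mem_ofPred_eq, mem_Ioi, mem_Ioo]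
      exact ⟨fun h => ⟨h.2, (ofReal_lt_iff_lt_toReal h.2.le hc).1 h.1⟩,
        fun h => ⟨(ofReal_lt_iff_lt_toReal h.1.le hc).2 h.2, h.1⟩⟩
    rw [this, Real.volume_Ioo, sub_zero, ofReal_toReal hc]

theorem volume_setOf_ofReal_lt_inter_Ioo (c : ℝ≥0∞) (t : ℝ) :
    volume ({s : ℝ | ENNReal.ofReal s < c} ∩ Ioo 0 t) = min c (ENNReal.ofReal t) := by
  rw [← volume_setOf_ofReal_lt_inter_Ioi (min c _)]
  congr 1
  ext s
  simp only [mem_inter_iff, mem_ofPred_eq, mem_Ioo, mem_Ioi, lt_min_iff, ofReal_lt_ofReal_iff']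
  grind

/-- Tonelli on `{(s, l) | s < G l}`, whose sections are `{l | l < F s}` and `{s | s < G l}`. -/
theorem lintegral_Ioo_eq_lintegral_Ioi_min {F G : ℝ → ℝ≥0∞} (hG : Antitone G) (t : ℝ)
    (hFG : ∀ s ∈ Ioo 0 t, ∀ l ∈ Ioi 0, ENNReal.ofReal l < F s ↔ ENNReal.ofReal s < G l) :
    ∫⁻ s in Ioo 0 t, F s = ∫⁻ l in Ioi 0, min (G l) (ENNReal.ofReal t) := by
  set K : Set (ℝ × ℝ) := {p | ENNReal.ofReal p.1 < G p.2}
  have hK : MeasurableSet K :=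
    measurableSet_lt measurable_fst.ennreal_ofReal (hG.measurable.comp measurable_snd)
  calc ∫⁻ s in Ioo 0 t, F s
      = ∫⁻ s in Ioo 0 t, volume.restrict (Ioi 0) (Prod.mk s ⁻¹' K) := by
        refine setLIntegral_congr_fun measurableSet_Ioo fun s hs => ?_
        rw [Measure.restrict_apply' measurableSet_Ioi, ← volume_setOf_ofReal_lt_inter_Ioi (F s)]
        congr 1
        ext l
        simp only [mem_inter_iff, mem_ofPred_eq, mem_preimage, mem_Ioi, K]
        exact ⟨fun h => ⟨(hFG s hs l h.2).1 h.1, h.2⟩, fun h => ⟨(hFG s hs l h.2).2 h.1, h.2⟩⟩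
    _ = ∫⁻ l in Ioi 0, volume.restrict (Ioo 0 t) ((fun s => (s, l)) ⁻¹' K) := by
        rw [← Measure.prod_apply hK, Measure.prod_apply_symm hK]
    _ = ∫⁻ l in Ioi 0, min (G l) (ENNReal.ofReal t) := by
        refine lintegral_congr fun l => ?_
        rw [Measure.restrict_apply' measurableSet_Ioo]
        exact volume_setOf_ofReal_lt_inter_Ioo (G l) t

def distribution {Ω : Type*} [MeasurableSpace Ω] (μ : Measure Ω) (g : Ω → ℝ) (c : ℝ≥0∞) :
    ℝ≥0∞ :=
  μ {x | c < (‖g x‖₊ : ℝ≥0∞)}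

section distribution

variable {Ω : Type*} [MeasurableSpace Ω] (μ : Measure Ω)

theorem distribution_antitone (g : Ω → ℝ) : Antitone (distribution μ g) :=
  fun _ _ h => measure_mono fun _ hx => lt_of_le_of_lt h hx

theorem distribution_iInf (g : Ω → ℝ) {c : ℕ → ℝ≥0∞} (hc : Antitone c) :
    distribution μ g (⨅ n, c n) = ⨆ n, distribution μ g (c n) := by
  have : {x | ⨅ n, c n < (‖g x‖₊ : ℝ≥0∞)} = ⋃ n, {x | c n < (‖g x‖₊ : ℝ≥0∞)} := by
    ext x
    simp [iInf_lt_iff]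
  rw [distribution, this]
  exact Monotone.measure_iUnion fun _ _ h _ hx => lt_of_le_of_lt (hc h) hx

theorem decRear_le_iff (g : Ω → ℝ) (s : ℝ) (c : ℝ≥0∞) :
    decRear μ g s ≤ c ↔ distribution μ g c ≤ ENNReal.ofReal s := by
  refine ⟨fun h => ?_, fun h => sInf_le h⟩
  obtain ⟨c', hanti, -, hlim, hmem⟩ :=
    (isGLB_sInf {c : ℝ≥0∞ | distribution μ g c ≤ ENNReal.ofReal s}).exists_seq_antitone_tendsto
      ⟨⊤, by simp [distribution]⟩
  have hinf : ⨅ n, c' n = decRear μ g s := tendsto_nhds_unique (tendsto_atTop_iInf hanti) hlim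
  calc distribution μ g c ≤ distribution μ g (decRear μ g s) := distribution_antitone μ g h
    _ = ⨆ n, distribution μ g (c' n) := by rw [← hinf, distribution_iInf μ g hanti]
    _ ≤ ENNReal.ofReal s := iSup_le hmem

theorem lt_decRear_iff (g : Ω → ℝ) (s : ℝ) (c : ℝ≥0∞) :
    c < decRear μ g s ↔ ENNReal.ofReal s < distribution μ g c := by
  simpa only [not_le] using (decRear_le_iff μ g s c).not

theorem lintegral_decRear_div (g : Ω → ℝ) {a : ℝ} (ha : 0 < a) (t : ℝ) :
    ∫⁻ s in Ioo 0 t, decRear μ g (s / a) =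
      ∫⁻ l in Ioi 0, min (ENNReal.ofReal a * distribution μ g (ENNReal.ofReal l))
        (ENNReal.ofReal t) := by
  refine lintegral_Ioo_eq_lintegral_Ioi_min
    (fun _ _ h => mul_le_mul_right (distribution_antitone μ g (ofReal_le_ofReal h)) _) t
    fun s _ l _ => ?_
  rw [lt_decRear_iff, ofReal_div_of_pos ha, ENNReal.div_lt_iff (by simp [ha]) (by simp), mul_comm]

theorem lintegral_decRear (g : Ω → ℝ) (t : ℝ) :
    ∫⁻ s in Ioo 0 t, decRear μ g s =
      ∫⁻ l in Ioi 0, min (distribution μ g (ENNReal.ofReal l)) (ENNReal.ofReal t) := by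
  simpa using lintegral_decRear_div μ g one_pos t

theorem distribution_add_of_ae_eq_zero_or {u v : Ω → ℝ} (hv : AEMeasurable v μ)
    (huv : ∀ᵐ x ∂μ, u x = 0 ∨ v x = 0) (c : ℝ≥0∞) :
    distribution μ (u + v) c = distribution μ u c + distribution μ v c := by
  have hunion : {x | c < (‖(u + v) x‖₊ : ℝ≥0∞)} =ᵐ[μ]
      ({x | c < (‖u x‖₊ : ℝ≥0∞)} ∪ {x | c < (‖v x‖₊ : ℝ≥0∞)} : Set Ω) := by
    rw [eventuallyEq_set]
    filter_upwards [huv] with x hx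
    rcases hx with h | h <;> simp [h]
  have hdisj : AEDisjoint μ {x | c < (‖u x‖₊ : ℝ≥0∞)} {x | c < (‖v x‖₊ : ℝ≥0∞)} := by
    refine measure_mono_null (fun x hx => ?_) (ae_iff.1 huv)
    rcases hx with ⟨hu, hv⟩
    exact not_or.2 ⟨fun h => by simp [h] at hu, fun h => by simp [h] at hv⟩
  exact (measure_congr hunion).trans
    (measure_union₀ (hv.enorm.nullMeasurable measurableSet_Ioi) hdisj)

end distribution

theorem submajorization_of_disjoint_sum_general {Ω : Type*} [MeasurableSpace Ω] (μ : Measure Ω)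
    (α : ℝ≥0∞)
    (u v : Ω → ℝ) (hv : AEMeasurable v μ)
    (hdisj : ∀ᵐ x ∂μ, min (u x) (v x) = 0)
    (f : ℝ → ℝ)
    (hmaju : ∀ t : ℝ, 0 ≤ t → ENNReal.ofReal t < α →
      ∫⁻ s in Set.Ioo (0 : ℝ) t, decRear μ u s ≤
        ∫⁻ s in Set.Ioo (0 : ℝ) t, decRear (volume.restrict (Set.Ioi (0 : ℝ))) f s)
    (hmajv : ∀ t : ℝ, 0 ≤ t → ENNReal.ofReal t < α →
      ∫⁻ s in Set.Ioo (0 : ℝ) t, decRear μ v s ≤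
        ∫⁻ s in Set.Ioo (0 : ℝ) t, decRear (volume.restrict (Set.Ioi (0 : ℝ))) f s) :
    ∀ t : ℝ, 0 ≤ t → ENNReal.ofReal t < α →
      ∫⁻ s in Set.Ioo (0 : ℝ) t, decRear μ (u + v) s ≤
        ∫⁻ s in Set.Ioo (0 : ℝ) t,
          decRear (volume.restrict (Set.Ioi (0 : ℝ))) f (s / 2) := by
  intro t _ htα
  set df := distribution (volume.restrict (Ioi 0)) f
  have transfer : ∀ {g : Ω → ℝ}, (∀ r : ℝ, 0 ≤ r → ENNReal.ofReal r < α →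
      ∫⁻ s in Ioo 0 r, decRear μ g s ≤ ∫⁻ s in Ioo 0 r, decRear (volume.restrict (Ioi 0)) f s) →
      ∀ C ≤ ENNReal.ofReal t, ∫⁻ l in Ioi 0, min (distribution μ g (ENNReal.ofReal l)) C ≤
        ∫⁻ l in Ioi 0, min (df (ENNReal.ofReal l)) C := by
    intro g hg C hC
    have hC' : ENNReal.ofReal C.toReal = C := ofReal_toReal (ne_top_of_le_ne_top ofReal_ne_top hC)
    simpa only [lintegral_decRear, hC'] using hg C.toReal toReal_nonneg (hC'.symm ▸ hC.trans_lt htα)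
  obtain ⟨A, B, hAB, hsplit⟩ := ENNReal.exists_add_eq_min_add_le_min_add_min
    (distribution_antitone μ u) (distribution_antitone μ v) (ofReal_ne_top (r := t))
  have huv : ∀ᵐ x ∂μ, u x = 0 ∨ v x = 0 := by
    filter_upwards [hdisj] with x hx
    rcases min_eq_iff.1 hx with h | h
    exacts [Or.inl h.1, Or.inr h.1]
  calc ∫⁻ s in Ioo 0 t, decRear μ (u + v) s
      = ∫⁻ l in Ioi 0, min (distribution μ u (ENNReal.ofReal l) +
          distribution μ v (ENNReal.ofReal l)) (ENNReal.ofReal t) := by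
        simp only [lintegral_decRear, distribution_add_of_ae_eq_zero_or μ hv huv]
    _ ≤ ∫⁻ l in Ioi 0, (min (distribution μ u (ENNReal.ofReal l)) A +
          min (distribution μ v (ENNReal.ofReal l)) B) := lintegral_mono fun l => hsplit _
    _ = (∫⁻ l in Ioi 0, min (distribution μ u (ENNReal.ofReal l)) A) +
          ∫⁻ l in Ioi 0, min (distribution μ v (ENNReal.ofReal l)) B :=
        lintegral_add_left (Antitone.measurable fun _ _ h =>
          min_le_min_right A (distribution_antitone μ u (ofReal_le_ofReal h))) _
    _ ≤ (∫⁻ l in Ioi 0, min (df (ENNReal.ofReal l)) A) +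
          ∫⁻ l in Ioi 0, min (df (ENNReal.ofReal l)) B :=
        add_le_add (transfer hmaju A (hAB ▸ le_self_add)) (transfer hmajv B (hAB ▸ le_add_self))
    _ ≤ ∫⁻ l in Ioi 0, (min (df (ENNReal.ofReal l)) A + min (df (ENNReal.ofReal l)) B) :=
        le_lintegral_add _ _
    _ ≤ ∫⁻ l in Ioi 0, min (ENNReal.ofReal 2 * df (ENNReal.ofReal l)) (ENNReal.ofReal t) := by
        gcongr with l
        rw [← hAB, ofReal_ofNat, two_mul]
        exact min_add_min_le_min_add_add
    _ = ∫⁻ s in Ioo 0 t, decRear (volume.restrict (Ioi 0)) f (s / 2) :=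
        (lintegral_decRear_div _ f two_pos t).symm

/-- **Statement 9.** Let `(Ω,Σ,μ)` be a σ-finite atomless measure space and `0 < α ≤ ∞`.
Suppose `u, v ∈ L₀(μ)⁺` satisfy `u ∧ v = 0` and `f ∈ L₀(0,∞)⁺` is such that
`∫₀ᵗ u* ≤ ∫₀ᵗ f*` and `∫₀ᵗ v* ≤ ∫₀ᵗ f*` for all `0 ≤ t < α`.  Then
`∫₀ᵗ (u+v)* (s) ds ≤ ∫₀ᵗ f*(s/2) ds` for all `0 ≤ t < α`. -/
theorem submajorization_of_disjoint_sum {Ω : Type*} [MeasurableSpace Ω] (μ : Measure Ω)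
    [SigmaFinite μ] [NullSingletonClass μ] (α : ℝ≥0∞) (hα : 0 < α)
    (u v : Ω → ℝ) (hu : AEMeasurable u μ) (hv : AEMeasurable v μ)
    (hu0 : 0 ≤ᵐ[μ] u) (hv0 : 0 ≤ᵐ[μ] v)
    (hdisj : ∀ᵐ x ∂μ, min (u x) (v x) = 0)
    (f : ℝ → ℝ) (hf : AEMeasurable f (volume.restrict (Set.Ioi (0 : ℝ))))
    (hf0 : 0 ≤ᵐ[volume.restrict (Set.Ioi (0 : ℝ))] f)
    (hmaju : ∀ t : ℝ, 0 ≤ t → ENNReal.ofReal t < α →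
      ∫⁻ s in Set.Ioo (0 : ℝ) t, decRear μ u s ≤
        ∫⁻ s in Set.Ioo (0 : ℝ) t, decRear (volume.restrict (Set.Ioi (0 : ℝ))) f s)
    (hmajv : ∀ t : ℝ, 0 ≤ t → ENNReal.ofReal t < α →
      ∫⁻ s in Set.Ioo (0 : ℝ) t, decRear μ v s ≤
        ∫⁻ s in Set.Ioo (0 : ℝ) t, decRear (volume.restrict (Set.Ioi (0 : ℝ))) f s) :
    ∀ t : ℝ, 0 ≤ t → ENNReal.ofReal t < α →
      ∫⁻ s in Set.Ioo (0 : ℝ) t, decRear μ (u + v) s ≤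
        ∫⁻ s in Set.Ioo (0 : ℝ) t,
          decRear (volume.restrict (Set.Ioi (0 : ℝ))) f (s / 2) :=
  submajorization_of_disjoint_sum_general μ α u v hv hdisj f hmaju hmajv
end

section
/- For all f₁,f₂ ∈ L₀(0,∞)⁺ and all t₁,t₂ ≥ 0, one has ∫₀^{t₁} f₁*(s) ds + ∫₀^{t₂} f₂*(s) ds ≤ ∫₀^{t₁+t₂} (f₁+f₂)*(s) ds. -/
/-!
The integral `∫₀ᵗ f*` has the dual description `min_c (t c + ∫ (|f| - c)₊ dμ)`, the minimum being
attained at `c = f*(t)`: both follow from `f*` and `|f|` being equimeasurable, via the layer cake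
formula, together with `f* ≥ f*(t)` on `(0, t)` and `f* ≤ f*(t)` after `t`. For `a, b ≥ 0` one has
`(a - c)₊ + (b - c)₊ ≤ (a + b - c)₊`, so evaluating the dual description of the two left-hand terms
at the optimal `c` for `f₁ + f₂` at time `t₁ + t₂` gives the inequality.
-/

open MeasureTheory Filter ENNReal

open Set

theorem ENNReal.tsub_add_tsub_le_add_tsub (a b c : ℝ≥0∞) : (a - c) + (b - c) ≤ a + b - c := by
  rcases le_total a c with hac | hca
  · rw [tsub_eq_zero_of_le hac, zero_add]
    exact tsub_le_tsub_right le_add_self c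
  rcases eq_or_ne c ∞ with rfl | hc
  · simp
  calc (a - c) + (b - c) ≤ (a - c) + b := add_le_add le_rfl tsub_le_self
    _ = a + b - c := ENNReal.sub_add_eq_add_sub hca hc

theorem Real.volume_restrict_Ioi_zero_setOf_ofReal_lt (a : ℝ≥0∞) :
    volume.restrict (Ioi (0 : ℝ)) {s | ENNReal.ofReal s < a} = a := by
  rw [Measure.restrict_apply' measurableSet_Ioi]
  rcases eq_or_ne a ∞ with rfl | ha
  · simp [Real.volume_Ioi]
  have hset : {s : ℝ | ENNReal.ofReal s < a} ∩ Ioi 0 = Ioo 0 a.toReal := by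
    ext s
    simp only [mem_inter_iff, mem_ofPred_eq, mem_Ioi, mem_Ioo]
    exact ⟨fun ⟨h, hs⟩ => ⟨hs, (ENNReal.ofReal_lt_iff_lt_toReal hs.le ha).mp h⟩,
      fun ⟨hs, h⟩ => ⟨(ENNReal.ofReal_lt_iff_lt_toReal hs.le ha).mpr h, hs⟩⟩
  rw [hset, Real.volume_Ioo, sub_zero, ofReal_toReal ha]

section LayerCake

variable {α β : Type*} [MeasurableSpace α] [MeasurableSpace β]

theorem lintegral_eq_lintegral_meas_ofReal_lt (ν : Measure α) [SFinite ν] {g : α → ℝ≥0∞}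
    (hg : AEMeasurable g ν) :
    ∫⁻ x, g x ∂ν = ∫⁻ l in Ioi 0, ν {x | ENNReal.ofReal l < g x} := by
  set g' := hg.mk g
  have hE : MeasurableSet {p : α × ℝ | ENNReal.ofReal p.2 < g' p.1} :=
    measurableSet_lt (by fun_prop) (hg.measurable_mk.comp measurable_fst)
  have hlevel (l : ℝ) : ν {x | ENNReal.ofReal l < g x} = ν {x | ENNReal.ofReal l < g' x} :=
    measure_congr <| eventuallyEq_set.mpr <| hg.ae_eq_mk.mono fun x hx => by
      rw [mem_ofPred_eq, mem_ofPred_eq, hx]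
  calc ∫⁻ x, g x ∂ν = ∫⁻ x, g' x ∂ν := lintegral_congr_ae hg.ae_eq_mk
    _ = ∫⁻ x, volume.restrict (Ioi 0) {l | ENNReal.ofReal l < g' x} ∂ν := by
      simp_rw [Real.volume_restrict_Ioi_zero_setOf_ofReal_lt]
    _ = (ν.prod (volume.restrict (Ioi 0))) {p | ENNReal.ofReal p.2 < g' p.1} :=
      (Measure.prod_apply hE).symm
    _ = ∫⁻ l in Ioi 0, ν {x | ENNReal.ofReal l < g x} := by
      simp_rw [Measure.prod_apply_symm hE, hlevel]
      rfl

theorem lintegral_eq_of_meas_lt_eq {ν : Measure α} {ν' : Measure β} [SFinite ν] [SFinite ν']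
    {g : α → ℝ≥0∞} {g' : β → ℝ≥0∞} (hg : AEMeasurable g ν) (hg' : AEMeasurable g' ν')
    (h : ∀ m, ν {x | m < g x} = ν' {y | m < g' y}) :
    ∫⁻ x, g x ∂ν = ∫⁻ y, g' y ∂ν' := by
  simp_rw [lintegral_eq_lintegral_meas_ofReal_lt ν hg,
    lintegral_eq_lintegral_meas_ofReal_lt ν' hg', h]

end LayerCake

section decRear

variable {α : Type*} [MeasurableSpace α] {μ : Measure α} {f : α → ℝ}

theorem decRear_antitone : Antitone (decRear μ f) := fun _ _ hst =>
  sInf_le_sInf fun _ hs => hs.trans (ENNReal.ofReal_le_ofReal hst)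

theorem measure_decRear_lt_enorm_le (t : ℝ) :
    μ {x | decRear μ f t < ‖f x‖ₑ} ≤ ENNReal.ofReal t := by
  set S := {s : ℝ≥0∞ | μ {x | s < ‖f x‖ₑ} ≤ ENNReal.ofReal t}
  obtain ⟨u, hu_anti, hu_lim, hu_mem⟩ :=
    exists_seq_tendsto_sInf (S := S) ⟨∞, by simp [S]⟩ (OrderBot.bddBelow S)
  have hunion : {x | sInf S < ‖f x‖ₑ} = ⋃ n, {x | u n < ‖f x‖ₑ} := by
    ext x
    simp only [mem_ofPred_eq, mem_iUnion]
    exact ⟨fun h => (hu_lim.eventually (gt_mem_nhds h)).exists,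
      fun ⟨n, hn⟩ => (sInf_le (hu_mem n)).trans_lt hn⟩
  change μ {x | sInf S < ‖f x‖ₑ} ≤ _
  rw [hunion, Monotone.measure_iUnion (s := fun n => {x | u n < ‖f x‖ₑ})
    fun m n hmn x hx => (hu_anti hmn).trans_lt hx]
  exact iSup_le hu_mem

theorem lt_decRear_iff_s4 {t : ℝ} {m : ℝ≥0∞} :
    m < decRear μ f t ↔ ENNReal.ofReal t < μ {x | m < ‖f x‖ₑ} := by
  constructor
  · intro h
    by_contra! h'
    exact h.not_ge (sInf_le h')
  · intro h
    by_contra! h'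
    exact h.not_ge ((measure_mono fun x hx => h'.trans_lt hx).trans (measure_decRear_lt_enorm_le t))

theorem volume_restrict_Ioi_zero_setOf_lt_decRear (m : ℝ≥0∞) :
    volume.restrict (Ioi 0) {s | m < decRear μ f s} = μ {x | m < ‖f x‖ₑ} := by
  simp_rw [lt_decRear_iff_s4]
  exact Real.volume_restrict_Ioi_zero_setOf_ofReal_lt _

variable [SFinite μ]

theorem lintegral_decRear_tsub (hf : AEMeasurable f μ) (c : ℝ≥0∞) :
    ∫⁻ s in Ioi 0, (decRear μ f s - c) = ∫⁻ x, (‖f x‖ₑ - c) ∂μ := by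
  refine lintegral_eq_of_meas_lt_eq
    (decRear_antitone.measurable.sub measurable_const).aemeasurable
    (hf.enorm.sub aemeasurable_const) fun m => ?_
  simp only [lt_tsub_iff_right]
  exact volume_restrict_Ioi_zero_setOf_lt_decRear (m + c)

theorem setLIntegral_decRear_le (hf : AEMeasurable f μ) (t : ℝ) (c : ℝ≥0∞) :
    ∫⁻ s in Ioo 0 t, decRear μ f s ≤ ENNReal.ofReal t * c + ∫⁻ x, (‖f x‖ₑ - c) ∂μ :=
  calc ∫⁻ s in Ioo 0 t, decRear μ f s ≤ ∫⁻ s in Ioo 0 t, (c + (decRear μ f s - c)) :=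
        lintegral_mono fun _ => le_add_tsub
    _ = ENNReal.ofReal t * c + ∫⁻ s in Ioo 0 t, (decRear μ f s - c) := by
      rw [lintegral_add_left measurable_const, setLIntegral_const, Real.volume_Ioo, sub_zero,
        mul_comm]
    _ ≤ ENNReal.ofReal t * c + ∫⁻ s in Ioi 0, (decRear μ f s - c) := by
      gcongr
      exact Ioo_subset_Ioi_self
    _ = ENNReal.ofReal t * c + ∫⁻ x, (‖f x‖ₑ - c) ∂μ := by rw [lintegral_decRear_tsub hf]

theorem setLIntegral_decRear_eq (hf : AEMeasurable f μ) (t : ℝ) :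
    ∫⁻ s in Ioo 0 t, decRear μ f s =
      ENNReal.ofReal t * decRear μ f t + ∫⁻ x, (‖f x‖ₑ - decRear μ f t) ∂μ := by
  set c := decRear μ f t
  refine (setLIntegral_decRear_le hf t c).antisymm ?_
  have htail : ∫⁻ s in Ici t, (decRear μ f s - c) = 0 := by
    rw [setLIntegral_congr_fun measurableSet_Ici fun s hs =>
      tsub_eq_zero_of_le (decRear_antitone hs)]
    exact lintegral_zero
  calc ENNReal.ofReal t * c + ∫⁻ x, (‖f x‖ₑ - c) ∂μ
      = ENNReal.ofReal t * c + ∫⁻ s in Ioi 0, (decRear μ f s - c) := by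
        rw [lintegral_decRear_tsub hf]
    _ ≤ ENNReal.ofReal t * c + ∫⁻ s in Ioo 0 t, (decRear μ f s - c) := by
      refine add_le_add le_rfl ?_
      calc ∫⁻ s in Ioi 0, (decRear μ f s - c)
          ≤ ∫⁻ s in Ioo 0 t ∪ Ici t, (decRear μ f s - c) :=
            lintegral_mono_set fun s hs => (lt_or_ge s t).imp (fun h => ⟨hs, h⟩) id
        _ ≤ _ := lintegral_union_le _ _ _
        _ = ∫⁻ s in Ioo 0 t, (decRear μ f s - c) := by rw [htail, add_zero]
    _ = ∫⁻ s in Ioo 0 t, (c + (decRear μ f s - c)) := by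
      rw [lintegral_add_left measurable_const, setLIntegral_const, Real.volume_Ioo, sub_zero,
        mul_comm]
    _ = ∫⁻ s in Ioo 0 t, decRear μ f s :=
      setLIntegral_congr_fun measurableSet_Ioo fun s hs =>
        add_tsub_cancel_of_le (decRear_antitone hs.2.le)

end decRear

/-- **Statement 10.** For all `f₁, f₂ ∈ L₀(0,∞)⁺` and all `t₁, t₂ ≥ 0`,
`∫₀^{t₁} f₁*(s) ds + ∫₀^{t₂} f₂*(s) ds ≤ ∫₀^{t₁+t₂} (f₁+f₂)*(s) ds`. -/
theorem rearrangement_superadditive (f₁ f₂ : ℝ → ℝ)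
    (hf₁ : AEMeasurable f₁ (volume.restrict (Set.Ioi (0 : ℝ))))
    (hf₂ : AEMeasurable f₂ (volume.restrict (Set.Ioi (0 : ℝ))))
    (hf₁0 : 0 ≤ᵐ[volume.restrict (Set.Ioi (0 : ℝ))] f₁)
    (hf₂0 : 0 ≤ᵐ[volume.restrict (Set.Ioi (0 : ℝ))] f₂)
    (t₁ t₂ : ℝ) (ht₁ : 0 ≤ t₁) (ht₂ : 0 ≤ t₂) :
    (∫⁻ s in Set.Ioo (0 : ℝ) t₁,
        decRear (volume.restrict (Set.Ioi (0 : ℝ))) f₁ s) +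
      ∫⁻ s in Set.Ioo (0 : ℝ) t₂,
        decRear (volume.restrict (Set.Ioi (0 : ℝ))) f₂ s ≤
    ∫⁻ s in Set.Ioo (0 : ℝ) (t₁ + t₂),
      decRear (volume.restrict (Set.Ioi (0 : ℝ))) (f₁ + f₂) s := by
  set μ := volume.restrict (Ioi (0 : ℝ))
  set c := decRear μ (f₁ + f₂) (t₁ + t₂)
  have hexcess : ∫⁻ x, (‖f₁ x‖ₑ - c) ∂μ + ∫⁻ x, (‖f₂ x‖ₑ - c) ∂μ ≤
      ∫⁻ x, (‖(f₁ + f₂) x‖ₑ - c) ∂μ := by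
    refine (le_lintegral_add _ _).trans (lintegral_mono_ae ?_)
    filter_upwards [hf₁0, hf₂0] with x h₁ h₂
    rw [Pi.add_apply, Real.enorm_eq_ofReal h₁, Real.enorm_eq_ofReal h₂,
      Real.enorm_eq_ofReal (add_nonneg h₁ h₂), ENNReal.ofReal_add h₁ h₂]
    exact ENNReal.tsub_add_tsub_le_add_tsub _ _ _
  calc _ ≤ (ENNReal.ofReal t₁ * c + ∫⁻ x, (‖f₁ x‖ₑ - c) ∂μ) +
        (ENNReal.ofReal t₂ * c + ∫⁻ x, (‖f₂ x‖ₑ - c) ∂μ) :=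
        add_le_add (setLIntegral_decRear_le hf₁ t₁ c) (setLIntegral_decRear_le hf₂ t₂ c)
    _ = ENNReal.ofReal (t₁ + t₂) * c +
        (∫⁻ x, (‖f₁ x‖ₑ - c) ∂μ + ∫⁻ x, (‖f₂ x‖ₑ - c) ∂μ) := by
      rw [ENNReal.ofReal_add ht₁ ht₂]
      ring
    _ ≤ ENNReal.ofReal (t₁ + t₂) * c + ∫⁻ x, (‖(f₁ + f₂) x‖ₑ - c) ∂μ := by gcongr
    _ = _ := (setLIntegral_decRear_eq (hf₁.add hf₂) (t₁ + t₂)).symm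
end

section
/- Let X be a Banach space and let (xₙ) be a sequence in X with xₙ → 0 weakly. If (x_k*) is a sequence in X* and ε>0 are such that sup_{k∈ℕ} |⟨xₙ, x_k*⟩| > ε for every n, then there exist a subsequence (x_{n_j}) of (xₙ) and a subsequence (x*_{k_j}) of (x_k*) such that |⟨x_{n_j}, x*_{k_j}⟩| > ε for all j. -/
open Filter

/-- **Statement 12.** Let `X` be a Banach space and `(xₙ)` a sequence with `xₙ → 0`
weakly.  If `(x_k*)` is a sequence in `X*` and `ε > 0` are such that
`sup_k |⟨xₙ, x_k*⟩| > ε` for every `n`, then there are subsequences `(x_{n_j})` and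
`(x*_{k_j})` with `|⟨x_{n_j}, x*_{k_j}⟩| > ε` for all `j`. -/
theorem exists_subsequences_of_weak_null {X : Type*} [NormedAddCommGroup X]
    [NormedSpace ℝ X] [CompleteSpace X]
    (x : ℕ → X) (hx : ∀ φ : X →L[ℝ] ℝ, Tendsto (fun n => φ (x n)) atTop (nhds 0))
    (φ : ℕ → X →L[ℝ] ℝ) (ε : ℝ) (hε : 0 < ε)
    (hsup : ∀ n, ∃ k, ε < |φ k (x n)|) :
    ∃ n k : ℕ → ℕ, StrictMono n ∧ StrictMono k ∧ ∀ j, ε < |φ (k j) (x (n j))| := by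
  have aux : ∀ N K : ℕ, ∃ p : ℕ × ℕ, N < p.1 ∧ K < p.2 ∧ ε < |φ p.2 (x p.1)| := by
    intro N K
    have h1 : ∀ k ≤ K, ∀ᶠ n in atTop, |φ k (x n)| ≤ ε := by
      intro k _
      have := (hx (φ k)).abs
      rw [abs_zero] at this
      exact this.eventually_le_const hε
    have h2 : ∀ᶠ n in atTop, ∀ k ∈ Set.Iic K, |φ k (x n)| ≤ ε :=
      (eventually_all_finite (Set.finite_Iic K)).mpr (fun k hk => h1 k hk)
    obtain ⟨M, hM⟩ := h2.exists_forall_of_atTop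
    refine ⟨(max M (N + 1), Classical.choose (hsup (max M (N + 1)))), ?_, ?_, ?_⟩
    · exact lt_of_lt_of_le (Nat.lt_succ_self N) (le_max_right _ _)
    · by_contra h
      push_neg at h
      have := hM (max M (N + 1)) (le_max_left _ _) _ (Set.mem_Iic.mpr h)
      exact absurd (Classical.choose_spec (hsup (max M (N + 1)))) (not_lt.mpr this)
    · exact Classical.choose_spec (hsup (max M (N + 1)))
  let f : ℕ → ℕ × ℕ := fun j =>
    Nat.rec (Classical.choose (aux 0 0)) (fun _ p => Classical.choose (aux p.1 p.2)) j
  have hstep : ∀ j, (f j).1 < (f (j + 1)).1 ∧ (f j).2 < (f (j + 1)).2 ∧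
      ε < |φ (f (j + 1)).2 (x (f (j + 1)).1)| := by
    intro j
    exact Classical.choose_spec (aux (f j).1 (f j).2)
  refine ⟨fun j => (f j).1, fun j => (f j).2,
    strictMono_nat_of_lt_succ (fun j => (hstep j).1),
    strictMono_nat_of_lt_succ (fun j => (hstep j).2.1), ?_⟩
  intro j
  cases j with
  | zero => exact (Classical.choose_spec (aux 0 0)).2.2
  | succ m => exact (hstep m).2.2
end

section
/- Let E be a Banach lattice, u₀ ∈ E⁺, δ>0, and let x₁*,…,x_N* be mutually disjoint elements of the positive cone of E*. If ⟨u₀, xₙ*⟩ ≥ δ for all 1 ≤ n ≤ N and {xₙ*}_{n=1}^N ⊆ [−y*, y*] + (δ/2)·B_{ρ_{u₀}} for some y* ∈ (E*)⁺, then N ≤ 2⟨u₀, y*⟩/δ. -/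
/-!
Pairwise disjointness lets one cut `u₀`, up to any `ε > 0`, into pieces `v₁, …, v_N ≥ 0` with
`∑ vₙ ≤ u₀` and `∑ xₙ*(u₀ - vₙ) < ε`: by induction, `x_j*` is disjoint from the sum of the
others, so `u₀ = (u₀ - a) + a` with `x_j*` almost vanishing on `a` and the others almost vanishing
on `u₀ - a`. Writing `xₙ* = zₙ* + wₙ*` with `zₙ* ∈ [-y*, y*]` and `ρ_{u₀}(wₙ*) ≤ δ/2`, one gets
`y*(vₙ) ≥ xₙ*(vₙ) - δ/2`, and summing over `n` gives `N δ/2 ≤ y*(u₀) + ε`.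
-/

open Filter

variable {E : Type*} [NormedAddCommGroup E] [Lattice E] [HasSolidNorm E] [IsOrderedAddMonoid E]
  [NormedSpace ℝ E]

/-- The Riesz seminorm `ρ_{u₀}(φ) = ⟨u₀, |φ|⟩`, computed via the Riesz–Kantorovich
formula `⟨u₀, |φ|⟩ = sup { φ(y) : |y| ≤ u₀ }`. -/
noncomputable def rhoEval (u₀ : E) (φ : E →L[ℝ] ℝ) : ℝ :=
  ⨆ y : {y : E // |y| ≤ u₀}, φ y

/-- `φ` lies in the order interval `[-χ, χ]` of the dual, i.e. `-χ ≤ φ ≤ χ`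
(with the dual order given by testing against the positive cone). -/
def MemDualInterval (φ χ : E →L[ℝ] ℝ) : Prop :=
  ∀ x : E, 0 ≤ x → -(χ x) ≤ φ x ∧ φ x ≤ χ x

section

open Finset

variable {E : Type*} [NormedAddCommGroup E] [Lattice E] [NormedSpace ℝ E]

theorem DualDisjointPos.zero_right (φ : E →L[ℝ] ℝ) : DualDisjointPos φ 0 :=
  fun x hx ε hε => ⟨0, le_rfl, hx, by simpa using hε⟩

theorem apply_le_rhoEval [HasSolidNorm E] (φ : E →L[ℝ] ℝ) {u₀ v : E} (hv : |v| ≤ u₀) :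
    φ v ≤ rhoEval u₀ φ := by
  refine le_ciSup (f := fun t : {y : E // |y| ≤ u₀} => φ t) ⟨‖φ‖ * ‖u₀‖, ?_⟩ ⟨v, hv⟩
  rintro _ ⟨⟨t, ht⟩, rfl⟩
  calc φ t ≤ ‖φ t‖ := le_abs_self _
    _ ≤ ‖φ‖ * ‖t‖ := φ.le_opNorm t
    _ ≤ ‖φ‖ * ‖u₀‖ := by gcongr; exact norm_le_norm_of_abs_le_abs (ht.trans (le_abs_self u₀))

variable [IsOrderedAddMonoid E]

theorem DualDisjointPos.add_right {φ χ₁ χ₂ : E →L[ℝ] ℝ} (hφ : Monotone φ)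
    (hχ₁ : Monotone χ₁) (hχ₂ : Monotone χ₂) (h₁ : DualDisjointPos φ χ₁)
    (h₂ : DualDisjointPos φ χ₂) : DualDisjointPos φ (χ₁ + χ₂) := by
  intro x hx ε hε
  obtain ⟨a₁, ha₁, ha₁x, hsmall₁⟩ := h₁ x hx (ε / 2) (half_pos hε)
  obtain ⟨a₂, ha₂, ha₂x, hsmall₂⟩ := h₂ x hx (ε / 2) (half_pos hε)
  set a := x ⊓ (a₁ + a₂)
  refine ⟨a, le_inf hx (add_nonneg ha₁ ha₂), inf_le_left, ?_⟩
  have hφa : φ a ≤ φ a₁ + φ a₂ := map_add φ a₁ a₂ ▸ hφ inf_le_right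
  have hχ₁a : χ₁ (x - a) ≤ χ₁ (x - a₁) :=
    hχ₁ (sub_le_sub_left (le_inf ha₁x (le_add_of_nonneg_right ha₂)) x)
  have hχ₂a : χ₂ (x - a) ≤ χ₂ (x - a₂) :=
    hχ₂ (sub_le_sub_left (le_inf ha₂x (le_add_of_nonneg_left ha₁)) x)
  rw [add_apply]
  linarith

theorem DualDisjointPos.sum_right {ι : Type*} {φ : E →L[ℝ] ℝ} {χ : ι → E →L[ℝ] ℝ}
    {s : Finset ι} (hφ : Monotone φ) (hχ : ∀ i ∈ s, Monotone (χ i))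
    (h : ∀ i ∈ s, DualDisjointPos φ (χ i)) : DualDisjointPos φ (∑ i ∈ s, χ i) :=
  (sum_induction χ (fun ψ => Monotone ψ ∧ DualDisjointPos φ ψ)
    (fun _ _ h₁ h₂ => ⟨h₁.1.add h₂.1, h₁.2.add_right hφ h₁.1 h₂.1 h₂.2⟩)
    ⟨monotone_const, zero_right φ⟩ fun i hi => ⟨hχ i hi, h i hi⟩).2

theorem exists_sum_le_of_pairwise_dualDisjointPos {ι : Type*} [DecidableEq ι]
    {x : ι → E →L[ℝ] ℝ} (hx : ∀ i, Monotone (x i)) (s : Finset ι)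
    (hdisj : (s : Set ι).Pairwise fun i j => DualDisjointPos (x i) (x j))
    {u : E} (hu : 0 ≤ u) {ε : ℝ} (hε : 0 < ε) :
    ∃ v : ι → E, (∀ i ∈ s, 0 ≤ v i) ∧ ∑ i ∈ s, v i ≤ u ∧ ∑ i ∈ s, x i (u - v i) < ε := by
  induction s using Finset.induction_on generalizing u ε with
  | empty => exact ⟨0, by simp, by simpa using hu, by simpa using hε⟩
  | insert j s hj ih =>
    have hjs : DualDisjointPos (x j) (∑ i ∈ s, x i) :=
      DualDisjointPos.sum_right (hx j) (fun i _ => hx i) fun i hi =>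
        hdisj (mem_insert_self j s) (mem_insert_of_mem hi) (ne_of_mem_of_not_mem hi hj).symm
    obtain ⟨a, ha, hau, hsplit⟩ := hjs u hu (ε / 2) (half_pos hε)
    obtain ⟨v, hv, hvsum, hvx⟩ :=
      ih (hdisj.mono (coe_subset.2 (subset_insert j s))) ha (half_pos hε)
    have hupdate : ∀ i ∈ s, Function.update v j (u - a) i = v i := fun i hi =>
      Function.update_of_ne (ne_of_mem_of_not_mem hi hj) _ _
    refine ⟨Function.update v j (u - a), ?_, ?_, ?_⟩
    · intro i hi
      rcases mem_insert.1 hi with rfl | hi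
      · simpa using hau
      · exact hupdate i hi ▸ hv i hi
    · rw [sum_insert hj, Function.update_self, sum_congr rfl hupdate]
      calc u - a + ∑ i ∈ s, v i ≤ u - a + a := add_le_add_right hvsum _
        _ = u := sub_add_cancel u a
    · have hadd : ∀ i ∈ s, x i (u - v i) = x i (u - a) + x i (a - v i) := fun i _ => by
        rw [← map_add, sub_add_sub_cancel]
      rw [sum_insert hj, Function.update_self, sub_sub_cancel,
        sum_congr rfl fun i hi => by rw [hupdate i hi, hadd i hi],
        sum_add_distrib]
      rw [_root_.sum_apply] at hsplit
      linarith

theorem MemDualInterval.apply_add_le [HasSolidNorm E] {z w ψ : E →L[ℝ] ℝ} {u₀ v : E} {r : ℝ}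
    (hz : MemDualInterval z ψ) (hw : rhoEval u₀ w ≤ r) (hv : 0 ≤ v) (hvu : v ≤ u₀) :
    (z + w) v ≤ ψ v + r := by
  have hwv : w v ≤ r := (apply_le_rhoEval w ((abs_of_nonneg hv).trans_le hvu)).trans hw
  rw [add_apply]
  linarith [(hz v hv).2]

end

theorem card_le_of_disjoint_almost_orderBounded_general {E : Type*}
    [NormedAddCommGroup E] [Lattice E] [HasSolidNorm E] [IsOrderedAddMonoid E]
    [NormedSpace ℝ E]
    (u₀ : E) (hu₀ : 0 ≤ u₀) (δ : ℝ) (hδ : 0 < δ) (N : ℕ)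
    (x : Fin N → E →L[ℝ] ℝ) (hxpos : ∀ n, ∀ a : E, 0 ≤ a → 0 ≤ x n a)
    (hdisj : ∀ n m : Fin N, n ≠ m → DualDisjointPos (x n) (x m))
    (hlb : ∀ n, δ ≤ x n u₀)
    (y : E →L[ℝ] ℝ) (hy : ∀ a : E, 0 ≤ a → 0 ≤ y a)
    (hcontain : ∀ n, ∃ z w : E →L[ℝ] ℝ,
      x n = z + w ∧ MemDualInterval z y ∧ rhoEval u₀ w ≤ δ / 2) :
    (N : ℝ) ≤ 2 * y u₀ / δ := by
  choose z w hzw hz hw using hcontain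
  suffices key : ∀ ε > 0, (N : ℝ) * (δ / 2) ≤ y u₀ + ε by
    rw [le_div_iff₀ hδ]
    linarith [le_of_forall_pos_le_add key]
  intro ε hε
  obtain ⟨v, hv, hvsum, hvx⟩ := exists_sum_le_of_pairwise_dualDisjointPos
    (fun n => (monotone_iff_map_nonneg (x n)).2 (hxpos n)) Finset.univ
    (fun n _ m _ hnm => hdisj n m hnm) hu₀ hε
  have hpiece : ∀ n, δ / 2 - x n (u₀ - v n) ≤ y (v n) := fun n => by
    have hvu : v n ≤ u₀ :=
      (Finset.single_le_sum hv (Finset.mem_univ n)).trans hvsum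
    have := hzw n ▸ (hz n).apply_add_le (hw n) (hv n (Finset.mem_univ n)) hvu
    linarith [map_sub (x n) u₀ (v n), hlb n]
  calc (N : ℝ) * (δ / 2) ≤ ∑ n, (δ / 2 - x n (u₀ - v n)) + ε := by
        rw [Finset.sum_sub_distrib]
        simp only [Finset.sum_const, Finset.card_univ, Fintype.card_fin, nsmul_eq_mul]
        linarith
    _ ≤ ∑ n, y (v n) + ε := by gcongr with n; exact hpiece n
    _ = y (∑ n, v n) + ε := by rw [map_sum]
    _ ≤ y u₀ + ε := by gcongr; exact (monotone_iff_map_nonneg y).2 hy hvsum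

/-- **Statement 13.** Let `E` be a Banach lattice, `u₀ ∈ E⁺`, `δ > 0`, and let
`x₁*,…,x_N*` be mutually disjoint positive functionals.  If `⟨u₀, xₙ*⟩ ≥ δ` for all `n`
and `{xₙ*} ⊆ [-y*, y*] + (δ/2)·B_{ρ_{u₀}}` for some `y* ∈ (E*)⁺`, then
`N ≤ 2⟨u₀, y*⟩/δ`. -/
theorem card_le_of_disjoint_almost_orderBounded {E : Type*}
    [NormedAddCommGroup E] [Lattice E] [HasSolidNorm E] [IsOrderedAddMonoid E]
    [NormedSpace ℝ E] [CompleteSpace E]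
    (u₀ : E) (hu₀ : 0 ≤ u₀) (δ : ℝ) (hδ : 0 < δ) (N : ℕ)
    (x : Fin N → E →L[ℝ] ℝ) (hxpos : ∀ n, ∀ a : E, 0 ≤ a → 0 ≤ x n a)
    (hdisj : ∀ n m : Fin N, n ≠ m → DualDisjointPos (x n) (x m))
    (hlb : ∀ n, δ ≤ x n u₀)
    (y : E →L[ℝ] ℝ) (hy : ∀ a : E, 0 ≤ a → 0 ≤ y a)
    (hcontain : ∀ n, ∃ z w : E →L[ℝ] ℝ,
      x n = z + w ∧ MemDualInterval z y ∧ rhoEval u₀ w ≤ δ / 2) :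
    (N : ℝ) ≤ 2 * y u₀ / δ :=
  card_le_of_disjoint_almost_orderBounded_general u₀ hu₀ δ hδ N x hxpos hdisj hlb y hy hcontain
end

section
/- Let E be a Banach lattice, u₀ ∈ E⁺, δ>0, and let D be a subset of the positive cone of E* such that ⟨u₀, x*⟩ ≥ δ for all x* ∈ D. If D is almost order bounded with respect to ρ_{u₀}, then there exists M ∈ ℕ such that every disjoint system in D contains at most M elements. -/
/-!
Disjointness lets us split `u₀` into pieces `xᵢ ≥ 0` with `∑ xᵢ ≤ u₀` and `φᵢ (u₀ - xᵢ) < δ/4`,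
peeling off one functional at a time: against the new functional `ψ`, every earlier `φᵢ` has
some `yᵢ ≤ u₀` with `φᵢ yᵢ + ψ (u₀ - yᵢ)` tiny, and `ψ` keeps `u₀ - ⨅ yᵢ` small because
`u₀ - a ⊓ b ≤ (u₀ - a) + (u₀ - b)`. If `D ⊆ [-g, g] + (δ/4) B_ρ`, then `φᵢ xᵢ > 3δ/4` forces
`g xᵢ ≥ δ/2`, hence `n δ/2 ≤ g u₀`.
-/

open Filter

variable {E : Type*} [NormedAddCommGroup E] [Lattice E] [HasSolidNorm E] [IsOrderedAddMonoid E] [NormedSpace ℝ E]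

theorem exists_le_forall_le_and_apply_sub_le_sum {L F ι : Type*} [Lattice L] [AddCommGroup L]
    [IsOrderedAddMonoid L] [FunLike F L ℝ] [AddMonoidHomClass F L ℝ] (ψ : F)
    (hψ : ∀ a : L, 0 ≤ a → 0 ≤ ψ a) {x : L} (hx : 0 ≤ x) (s : Finset ι) (y : ι → L)
    (hy : ∀ i ∈ s, 0 ≤ y i ∧ y i ≤ x) :
    ∃ v, 0 ≤ v ∧ v ≤ x ∧ (∀ i ∈ s, v ≤ y i) ∧ ψ (x - v) ≤ ∑ i ∈ s, ψ (x - y i) := by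
  classical
  induction s using Finset.induction_on with
  | empty => exact ⟨x, hx, le_rfl, by simp, by simp⟩
  | insert a s ha ih =>
    obtain ⟨v, hv0, hvx, hvy, hvψ⟩ := ih fun i hi => hy i (Finset.mem_insert_of_mem hi)
    obtain ⟨hya0, hyax⟩ := hy a (Finset.mem_insert_self a s)
    refine ⟨v ⊓ y a, le_inf hv0 hya0, inf_le_left.trans hvx, ?_, ?_⟩
    · simp only [Finset.mem_insert, forall_eq_or_imp]
      exact ⟨inf_le_right, fun i hi => inf_le_left.trans (hvy i hi)⟩
    · have hsub : x - v ⊓ y a ≤ (x - v) + (x - y a) := by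
        rw [sub_inf]
        exact sup_le (le_add_of_nonneg_right (sub_nonneg.2 hyax))
          (le_add_of_nonneg_left (sub_nonneg.2 hvx))
      calc ψ (x - v ⊓ y a) ≤ ψ (x - v) + ψ (x - y a) := by
            rw [← map_add]; exact (monotone_iff_map_nonneg ψ).2 hψ hsub
        _ ≤ ∑ i ∈ insert a s, ψ (x - y i) := by
            rw [Finset.sum_insert ha]; linarith

section DisjointSystems

variable {E : Type*} [NormedAddCommGroup E] [Lattice E] [NormedSpace ℝ E]

theorem exists_apply_sub_lt_and_apply_lt_of_dualDisjointPos [IsOrderedAddMonoid E] {ι : Type*}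
    {ψ : E →L[ℝ] ℝ} (hψ : ∀ a : E, 0 ≤ a → 0 ≤ ψ a) (s : Finset ι) {φ : ι → E →L[ℝ] ℝ}
    (hφ : ∀ i ∈ s, ∀ a : E, 0 ≤ a → 0 ≤ φ i a) (hdisj : ∀ i ∈ s, DualDisjointPos (φ i) ψ)
    {x : E} (hx : 0 ≤ x) {η : ℝ} (hη : 0 < η) :
    ∃ v, 0 ≤ v ∧ v ≤ x ∧ ψ (x - v) < η ∧ ∀ i ∈ s, φ i v < η := by
  set η' := η / (s.card + 1)
  have hη' : 0 < η' := by positivity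
  have hη'η : η' ≤ η := div_le_self hη.le (by simp)
  have hcard : s.card * η' < η := by
    rw [mul_div_assoc', div_lt_iff₀ (by positivity)]; nlinarith
  choose! y hy0 hyx hy using fun i hi => hdisj i hi x hx η' hη'
  obtain ⟨v, hv0, hvx, hvy, hvψ⟩ := exists_le_forall_le_and_apply_sub_le_sum ψ hψ hx s y
    fun i hi => ⟨hy0 i hi, hyx i hi⟩
  refine ⟨v, hv0, hvx, ?_, fun i hi => ?_⟩
  · have hψy : ∀ i ∈ s, ψ (x - y i) ≤ η' := fun i hi => by
      linarith [hy i hi, hφ i hi (y i) (hy0 i hi)]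
    calc ψ (x - v) ≤ ∑ i ∈ s, ψ (x - y i) := hvψ
      _ ≤ s.card • η' := Finset.sum_le_card_nsmul s _ η' hψy
      _ < η := by rwa [nsmul_eq_mul]
  · calc φ i v ≤ φ i (y i) := (monotone_iff_map_nonneg (φ i)).2 (hφ i hi) (hvy i hi)
      _ < η' := by linarith [hy i hi, hψ (x - y i) (sub_nonneg.2 (hyx i hi))]
      _ ≤ η := hη'η

theorem exists_decomposition_of_pairwise_dualDisjointPos [IsOrderedAddMonoid E] {ι : Type*}
    {φ : ι → E →L[ℝ] ℝ} (hφ : ∀ i, ∀ a : E, 0 ≤ a → 0 ≤ φ i a)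
    (hdisj : Pairwise fun i j => DualDisjointPos (φ i) (φ j)) (s : Finset ι) {x : E}
    (hx : 0 ≤ x) {η : ℝ} (hη : 0 < η) :
    ∃ xs : ι → E, (∀ i ∈ s, 0 ≤ xs i) ∧ ∑ i ∈ s, xs i ≤ x ∧ ∀ i ∈ s, φ i (x - xs i) < η := by
  classical
  induction s using Finset.induction_on generalizing x η with
  | empty => exact ⟨0, by simp, by simpa using hx, by simp⟩
  | insert a s ha ih =>
    obtain ⟨v, hv0, hvx, hva, hvs⟩ := exists_apply_sub_lt_and_apply_lt_of_dualDisjointPos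
      (hφ a) s (fun i _ => hφ i) (fun i hi => hdisj (ne_of_mem_of_not_mem hi ha)) hx (half_pos hη)
    obtain ⟨xs, hxs0, hxs, hxsφ⟩ := ih (sub_nonneg.2 hvx) (half_pos hη)
    refine ⟨Function.update xs a v, ?_, ?_, ?_⟩
    · simp only [Finset.mem_insert, forall_eq_or_imp, Function.update_self]
      refine ⟨hv0, fun i hi => ?_⟩
      rw [Function.update_of_ne (ne_of_mem_of_not_mem hi ha)]
      exact hxs0 i hi
    · rw [Finset.sum_insert ha, Function.update_self, Finset.sum_update_of_notMem ha]
      exact add_comm v _ ▸ le_sub_iff_add_le.1 hxs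
    · simp only [Finset.mem_insert, forall_eq_or_imp, Function.update_self]
      refine ⟨hva.trans (half_lt_self hη), fun i hi => ?_⟩
      rw [Function.update_of_ne (ne_of_mem_of_not_mem hi ha),
        show x - xs i = (x - v - xs i) + v by abel, map_add]
      linarith [hxsφ i hi, hvs i hi]

theorem le_rhoEval [HasSolidNorm E] {u₀ x : E} (w : E →L[ℝ] ℝ) (hx : |x| ≤ u₀) :
    w x ≤ rhoEval u₀ w := by
  refine le_ciSup (f := fun y : {y : E // |y| ≤ u₀} => w y) ⟨‖w‖ * ‖u₀‖, ?_⟩ ⟨x, hx⟩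
  rintro r ⟨⟨y, hy⟩, rfl⟩
  calc w y ≤ ‖w y‖ := le_abs_self _
    _ ≤ ‖w‖ * ‖y‖ := w.le_opNorm y
    _ ≤ ‖w‖ * ‖u₀‖ := by
        gcongr; exact norm_le_norm_of_abs_le_abs (hy.trans (le_abs_self u₀))

theorem apply_le_add_of_eq_add_of_memDualInterval [HasSolidNorm E] [IsOrderedAddMonoid E]
    {u₀ x : E} {φ z w g : E →L[ℝ] ℝ} {ε : ℝ} (hφ : φ = z + w) (hz : MemDualInterval z g)
    (hw : rhoEval u₀ w ≤ ε) (hx0 : 0 ≤ x) (hxu : x ≤ u₀) : φ x ≤ g x + ε := by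
  have hwx : w x ≤ ε := (le_rhoEval w (by rwa [abs_of_nonneg hx0])).trans hw
  subst hφ
  exact add_le_add (hz x hx0).2 hwx

end DisjointSystems

theorem disjoint_systems_bounded_of_almost_orderBounded_general {E : Type*}
    [NormedAddCommGroup E] [Lattice E] [HasSolidNorm E] [IsOrderedAddMonoid E] [NormedSpace ℝ E]
    (u₀ : E) (hu₀ : 0 ≤ u₀) (δ : ℝ) (hδ : 0 < δ) (D : Set (E →L[ℝ] ℝ))
    (hDpos : ∀ φ ∈ D, ∀ a : E, 0 ≤ a → 0 ≤ φ a)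
    (hDlb : ∀ φ ∈ D, δ ≤ φ u₀)
    (haob : ∀ ε : ℝ, 0 < ε → ∃ y : E →L[ℝ] ℝ, (∀ a : E, 0 ≤ a → 0 ≤ y a) ∧
      ∀ φ ∈ D, ∃ z w : E →L[ℝ] ℝ,
        φ = z + w ∧ MemDualInterval z y ∧ rhoEval u₀ w ≤ ε) :
    ∃ M : ℕ, ∀ (n : ℕ) (φ : Fin n → E →L[ℝ] ℝ), (∀ i, φ i ∈ D) →
      Function.Injective φ →
      (∀ i j : Fin n, i ≠ j → DualDisjointPos (φ i) (φ j)) → n ≤ M := by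
  obtain ⟨g, hg, hgD⟩ := haob (δ / 4) (by positivity)
  refine ⟨⌈2 * g u₀ / δ⌉₊, fun n φ hφD _ hdisj => ?_⟩
  obtain ⟨xs, hxs0, hxs, hφxs⟩ := exists_decomposition_of_pairwise_dualDisjointPos
    (fun i => hDpos _ (hφD i)) hdisj Finset.univ hu₀ (show 0 < δ / 4 by positivity)
  have hgxs : ∀ i, δ / 2 ≤ g (xs i) := fun i => by
    have hxsu : xs i ≤ u₀ :=
      (Finset.single_le_sum (fun j _ => hxs0 j (Finset.mem_univ j)) (Finset.mem_univ i)).trans hxs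
    obtain ⟨z, w, hzw, hz, hw⟩ := hgD (φ i) (hφD i)
    have hsplit : φ i u₀ = φ i (xs i) + φ i (u₀ - xs i) := by rw [← map_add, add_sub_cancel]
    linarith [hDlb _ (hφD i), hφxs i (Finset.mem_univ i),
      apply_le_add_of_eq_add_of_memDualInterval hzw hz hw (hxs0 i (Finset.mem_univ i)) hxsu]
  have hn : n * (δ / 2) ≤ g u₀ :=
    calc n * (δ / 2) = ∑ _i : Fin n, δ / 2 := by simp
      _ ≤ ∑ i, g (xs i) := Finset.sum_le_sum fun i _ => hgxs i
      _ = g (∑ i, xs i) := (map_sum g xs Finset.univ).symm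
      _ ≤ g u₀ := (monotone_iff_map_nonneg g).2 hg hxs
  have hnδ : (n : ℝ) ≤ 2 * g u₀ / δ := by rw [le_div_iff₀ hδ]; linarith
  exact_mod_cast hnδ.trans (Nat.le_ceil _)

/-- **Statement 14.** Let `E` be a Banach lattice, `u₀ ∈ E⁺`, `δ > 0`, and let
`D ⊆ (E*)⁺` with `⟨u₀, x*⟩ ≥ δ` for all `x* ∈ D`.  If `D` is almost order bounded with
respect to `ρ_{u₀}`, then there is `M ∈ ℕ` such that every disjoint system in `D` has at
most `M` elements. -/
theorem disjoint_systems_bounded_of_almost_orderBounded {E : Type*}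
    [NormedAddCommGroup E] [Lattice E] [HasSolidNorm E] [IsOrderedAddMonoid E] [NormedSpace ℝ E] [CompleteSpace E]
    (u₀ : E) (hu₀ : 0 ≤ u₀) (δ : ℝ) (hδ : 0 < δ) (D : Set (E →L[ℝ] ℝ))
    (hDpos : ∀ φ ∈ D, ∀ a : E, 0 ≤ a → 0 ≤ φ a)
    (hDlb : ∀ φ ∈ D, δ ≤ φ u₀)
    (haob : ∀ ε : ℝ, 0 < ε → ∃ y : E →L[ℝ] ℝ, (∀ a : E, 0 ≤ a → 0 ≤ y a) ∧
      ∀ φ ∈ D, ∃ z w : E →L[ℝ] ℝ,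
        φ = z + w ∧ MemDualInterval z y ∧ rhoEval u₀ w ≤ ε) :
    ∃ M : ℕ, ∀ (n : ℕ) (φ : Fin n → E →L[ℝ] ℝ), (∀ i, φ i ∈ D) →
      Function.Injective φ →
      (∀ i j : Fin n, i ≠ j → DualDisjointPos (φ i) (φ j)) → n ≤ M :=
  disjoint_systems_bounded_of_almost_orderBounded_general u₀ hu₀ δ hδ D hDpos hDlb haob
end
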